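/- arXiv:1112.5561 — 7 statements merged into one kernel-verified Lean document; each statement's English description precedes it below -/
import Mathlib

section
/- Let w be a modular on X and κ:[0,∞)→[0,∞) be superadditive (κ(λ)+κ(μ) ≤ κ(λ+μ) for all λ,μ≥0), satisfying κ(u)>0 for u>0 and κ(u)→0 as u→0+. Then d_{κ,w}(x,y) = inf{λ>0 : w_λ(x,y) ≤ κ(λ)} defines a metric on the modular space X_w* around a fixed base point x₀. -/
open ENNReal Filter

/-!
For `x, y` in the modular space, `w_λ(x,y)` is finite for some `λ`, decreases in `λ`, and
`κ(nλ) ≥ n κ(λ)` grows without bound, so the set `{λ > 0 : w_λ(x,y) ≤ κ(λ)}` is nonempty.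
Symmetry and `d(x,x) = 0` are immediate; the triangle inequality holds because the triangle
inequality of `w` and superadditivity of `κ` make the set for `(x,z)` contain the sum of the sets
for `(x,y)` and `(y,z)`. Finally, if `x ≠ y` then `w_{λ₀}(x,y) > 0` for some `λ₀`, and since
`κ(0+) = 0` no `λ` below some `δ > 0` belongs to the set, so `d(x,y) ≥ min δ λ₀ > 0`.
-/

open Set Pointwise

section Superadditive

variable {κ : ℝ → ℝ}

lemma succ_mul_le_of_superadditive (hsuper : ∀ l m : ℝ, 0 ≤ l → 0 ≤ m → κ l + κ m ≤ κ (l + m))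
    {u : ℝ} (hu : 0 ≤ u) (n : ℕ) : ((n : ℝ) + 1) * κ u ≤ κ (((n : ℝ) + 1) * u) := by
  induction n with
  | zero => simp
  | succ n ih =>
    have hstep := hsuper (((n : ℝ) + 1) * u) u (by positivity) hu
    rw [show ((n : ℝ) + 1) * u + u = ((n : ℝ) + 1 + 1) * u by ring] at hstep
    push_cast
    linarith

end Superadditive

section Modular

variable {X : Type*} {w : ℝ → X → X → ℝ≥0∞}

lemma antitoneOn_of_triangle (hself : ∀ l : ℝ, 0 < l → ∀ x : X, w l x x = 0)
    (htri : ∀ l m : ℝ, 0 < l → 0 < m → ∀ x y z : X, w (l + m) x y ≤ w l x z + w m z y)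
    (x y : X) : AntitoneOn (fun l => w l x y) (Ioi 0) := by
  intro l (hl : 0 < l) l' _ hll'
  rcases hll'.eq_or_lt with rfl | hlt
  · exact le_rfl
  · simpa [hself _ (sub_pos.2 hlt)] using htri l (l' - l) hl (sub_pos.2 hlt) x y y

lemma lt_top_of_base_lt_top (hsym : ∀ l : ℝ, 0 < l → ∀ x y : X, w l x y = w l y x)
    (htri : ∀ l m : ℝ, 0 < l → 0 < m → ∀ x y z : X, w (l + m) x y ≤ w l x z + w m z y)
    {x y x₀ : X} {a b : ℝ} (ha : 0 < a) (hb : 0 < b)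
    (hx : w a x x₀ < ⊤) (hy : w b y x₀ < ⊤) : w (a + b) x y < ⊤ :=
  (htri a b ha hb x y x₀).trans_lt (by rw [hsym b hb]; exact ENNReal.add_lt_top.2 ⟨hx, hy⟩)

end Modular

section Gauge

variable {X : Type*} {w : ℝ → X → X → ℝ≥0∞} {κ : ℝ → ℝ} {x y z : X}

def modularGaugeSet (w : ℝ → X → X → ℝ≥0∞) (κ : ℝ → ℝ) (x y : X) : Set ℝ :=
  {l : ℝ | 0 < l ∧ w l x y ≤ ENNReal.ofReal (κ l)}

/-- `d_{κ,w}(x,y)`; it is `0` (junk) when the gauge set is empty. -/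
noncomputable def modularGauge (w : ℝ → X → X → ℝ≥0∞) (κ : ℝ → ℝ) (x y : X) : ℝ :=
  sInf (modularGaugeSet w κ x y)

lemma bddBelow_modularGaugeSet : BddBelow (modularGaugeSet w κ x y) :=
  ⟨0, fun _ hl => hl.1.le⟩

lemma modularGauge_nonneg : 0 ≤ modularGauge w κ x y :=
  Real.sInf_nonneg fun _ hl => hl.1.le

lemma modularGaugeSet_nonempty (hanti : AntitoneOn (fun l => w l x y) (Ioi 0))
    (hsuper : ∀ l m : ℝ, 0 ≤ l → 0 ≤ m → κ l + κ m ≤ κ (l + m))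
    (hpos : ∀ u : ℝ, 0 < u → 0 < κ u) {l : ℝ} (hl : 0 < l) (hfin : w l x y < ⊤) :
    (modularGaugeSet w κ x y).Nonempty := by
  obtain ⟨n, hn⟩ := exists_nat_ge ((w l x y).toReal / κ l)
  have hn' : (w l x y).toReal ≤ n * κ l := (div_le_iff₀ (hpos l hl)).1 hn
  have hlL : l ≤ ((n : ℝ) + 1) * l := le_mul_of_one_le_left hl.le (by linarith [n.cast_nonneg (α := ℝ)])
  refine ⟨((n : ℝ) + 1) * l, by positivity, ?_⟩
  calc w (((n : ℝ) + 1) * l) x y ≤ w l x y := hanti hl (hl.trans_le hlL) hlL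
    _ = ENNReal.ofReal (w l x y).toReal := (ofReal_toReal hfin.ne).symm
    _ ≤ ENNReal.ofReal (κ (((n : ℝ) + 1) * l)) := by
      refine ofReal_le_ofReal (hn'.trans ?_)
      nlinarith [succ_mul_le_of_superadditive hsuper hl.le n, hpos l hl]

lemma modularGauge_self (hself : ∀ l : ℝ, 0 < l → w l x x = 0) : modularGauge w κ x x = 0 := by
  have : modularGaugeSet w κ x x = Ioi 0 := by
    ext l
    exact ⟨fun h => h.1, fun hl => ⟨hl, by simp [hself l hl]⟩⟩
  rw [modularGauge, this, csInf_Ioi]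

lemma modularGauge_comm (hsym : ∀ l : ℝ, 0 < l → ∀ x y : X, w l x y = w l y x) :
    modularGauge w κ x y = modularGauge w κ y x := by
  have : modularGaugeSet w κ x y = modularGaugeSet w κ y x := by
    ext l
    exact and_congr_right fun hl => by rw [hsym l hl]
  rw [modularGauge, this, modularGauge]

lemma add_subset_modularGaugeSet
    (htri : ∀ l m : ℝ, 0 < l → 0 < m → ∀ x y z : X, w (l + m) x y ≤ w l x z + w m z y)
    (hsuper : ∀ l m : ℝ, 0 ≤ l → 0 ≤ m → κ l + κ m ≤ κ (l + m))
    (hpos : ∀ u : ℝ, 0 < u → 0 < κ u) :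
    modularGaugeSet w κ x y + modularGaugeSet w κ y z ⊆ modularGaugeSet w κ x z := by
  rintro _ ⟨l, ⟨hl, hlw⟩, m, ⟨hm, hmw⟩, rfl⟩
  refine ⟨add_pos hl hm, ?_⟩
  calc w (l + m) x z ≤ w l x y + w m y z := htri l m hl hm x z y
    _ ≤ ENNReal.ofReal (κ l) + ENNReal.ofReal (κ m) := add_le_add hlw hmw
    _ = ENNReal.ofReal (κ l + κ m) := (ofReal_add (hpos l hl).le (hpos m hm).le).symm
    _ ≤ ENNReal.ofReal (κ (l + m)) := ofReal_le_ofReal (hsuper l m hl.le hm.le)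

lemma modularGauge_le_add
    (htri : ∀ l m : ℝ, 0 < l → 0 < m → ∀ x y z : X, w (l + m) x y ≤ w l x z + w m z y)
    (hsuper : ∀ l m : ℝ, 0 ≤ l → 0 ≤ m → κ l + κ m ≤ κ (l + m))
    (hpos : ∀ u : ℝ, 0 < u → 0 < κ u)
    (hxy : (modularGaugeSet w κ x y).Nonempty) (hyz : (modularGaugeSet w κ y z).Nonempty) :
    modularGauge w κ x z ≤ modularGauge w κ x y + modularGauge w κ y z := by
  rw [modularGauge, modularGauge, modularGauge,
    ← csInf_add hxy bddBelow_modularGaugeSet hyz bddBelow_modularGaugeSet]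
  exact csInf_le_csInf bddBelow_modularGaugeSet (hxy.add hyz)
    (add_subset_modularGaugeSet htri hsuper hpos)

lemma modularGauge_pos (hanti : AntitoneOn (fun l => w l x y) (Ioi 0))
    (hlim : Tendsto κ (nhdsWithin 0 (Ioi 0)) (nhds 0))
    (hne : (modularGaugeSet w κ x y).Nonempty) {l₀ : ℝ} (hl₀ : 0 < l₀) (hw : w l₀ x y ≠ 0) :
    0 < modularGauge w κ x y := by
  have hlim' : Tendsto (fun m => ENNReal.ofReal (κ m)) (nhdsWithin 0 (Ioi 0)) (nhds 0) := by
    simpa using ENNReal.tendsto_ofReal hlim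
  have hsmall : ∀ᶠ m in nhdsWithin 0 (Ioi 0), ENNReal.ofReal (κ m) < w l₀ x y :=
    hlim'.eventually_lt_const (pos_iff_ne_zero.2 hw)
  obtain ⟨δ, hδ, hδsmall⟩ := mem_nhdsGT_iff_exists_Ioo_subset.1 hsmall
  refine (lt_min hδ hl₀).trans_le (le_csInf hne fun m ⟨hm, hmw⟩ => ?_)
  by_contra! hlt
  have hκm : ENNReal.ofReal (κ m) < w l₀ x y := hδsmall ⟨hm, hlt.trans_le (min_le_left _ _)⟩
  have hml₀ : m ≤ l₀ := (hlt.trans_le (min_le_right _ _)).le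
  exact (((hanti hm hl₀ hml₀).trans hmw).trans_lt hκm).false

end Gauge

/-- For a modular `w` and a superadditive `κ` positive on `(0,∞)` with `κ(0+)=0`,
`d_{κ,w}(x,y) = inf{λ>0 : w_λ(x,y) ≤ κ(λ)}` is a metric on the modular space
`X_w* = {x : ∃ λ>0, w_λ(x,x₀) < ∞}`. -/
theorem stmt6 {X : Type*} (w : ℝ → X → X → ℝ≥0∞) (x₀ : X)
    (hdeg : ∀ x y : X, x = y ↔ (∀ l : ℝ, 0 < l → w l x y = 0))
    (hsym : ∀ l : ℝ, 0 < l → ∀ x y : X, w l x y = w l y x)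
    (htri : ∀ l m : ℝ, 0 < l → 0 < m → ∀ x y z : X,
      w (l + m) x y ≤ w l x z + w m z y)
    (κ : ℝ → ℝ)
    (hsuper : ∀ l m : ℝ, 0 ≤ l → 0 ≤ m → κ l + κ m ≤ κ (l + m))
    (hpos : ∀ u : ℝ, 0 < u → 0 < κ u)
    (hlim : Tendsto κ (nhdsWithin 0 (Set.Ioi 0)) (nhds 0))
    (S : Set X) (hS : S = {x : X | ∃ l : ℝ, 0 < l ∧ w l x x₀ < ⊤})
    (D : X → X → ℝ)
    (hD : ∀ x y : X, D x y = sInf {l : ℝ | 0 < l ∧ w l x y ≤ ENNReal.ofReal (κ l)}) :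
    (∀ x ∈ S, ∀ y ∈ S, 0 ≤ D x y) ∧
    (∀ x ∈ S, ∀ y ∈ S, (D x y = 0 ↔ x = y)) ∧
    (∀ x ∈ S, ∀ y ∈ S, D x y = D y x) ∧
    (∀ x ∈ S, ∀ y ∈ S, ∀ z ∈ S, D x z ≤ D x y + D y z) := by
  obtain rfl : D = modularGauge w κ := funext fun x => funext (hD x)
  have hself : ∀ l : ℝ, 0 < l → ∀ x : X, w l x x = 0 := fun l hl x => (hdeg x x).1 rfl l hl
  have hanti := antitoneOn_of_triangle hself htri
  have hne : ∀ x ∈ S, ∀ y ∈ S, (modularGaugeSet w κ x y).Nonempty := by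
    rw [hS]
    rintro x ⟨a, ha, hxa⟩ y ⟨b, hb, hyb⟩
    exact modularGaugeSet_nonempty (hanti x y) hsuper hpos (add_pos ha hb)
      (lt_top_of_base_lt_top hsym htri ha hb hxa hyb)
  refine ⟨fun _ _ _ _ => modularGauge_nonneg, fun x hx y hy => ⟨fun h0 => ?_, ?_⟩,
    fun _ _ _ _ => modularGauge_comm hsym,
    fun x hx y hy z hz => modularGauge_le_add htri hsuper hpos (hne x hx y hy) (hne y hy z hz)⟩
  · by_contra hxy
    obtain ⟨l₀, hl₀, hw⟩ : ∃ l₀ : ℝ, 0 < l₀ ∧ w l₀ x y ≠ 0 := by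
      simpa using (hdeg x y).not.1 hxy
    exact (modularGauge_pos (hanti x y) hlim (hne x hx y hy) hl₀ hw).ne' h0
  · rintro rfl
    exact modularGauge_self fun l hl => hself l hl x
end

section
/- Let w be a convex modular on X. Then the metric convergence with respect to d_w* coincides with modular convergence on X_w* if and only if w satisfies the Δ₂-condition: whenever {x_n}⊂X_w*, x∈X_w*, and w_λ(x_n,x)→0 for some λ>0, then w_{λ/2}(x_n,x)→0. -/
/-!
The convexity inequality with `z = y` gives `w_μ(x, y) ≤ (λ/μ) w_λ(x, y)` for `λ < μ`. Hence `w` is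
antitone in `λ`, and `d*(x_n, x) → 0`, i.e. `w_t(x_n, x) ≤ 1` eventually for every `t > 0`, forces
`w_λ(x_n, x) ≤ t/λ` eventually: metric convergence is modular convergence for *every* `λ`.
Modular convergence for *some* `λ` upgrades to every `λ` exactly when one may halve `λ`, which is
the Δ₂-condition.
-/

open ENNReal Filter Topology

namespace ConvexModular

variable {X ι : Type*} {w : ℝ → X → X → ℝ≥0∞}

def IsConvex (w : ℝ → X → X → ℝ≥0∞) : Prop :=
  ∀ l m : ℝ, 0 < l → 0 < m → ∀ x y z : X,
    w (l + m) x y ≤ ENNReal.ofReal (l / (l + m)) * w l x z + ENNReal.ofReal (m / (l + m)) * w m y z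

def modularSpace (w : ℝ → X → X → ℝ≥0∞) (x₀ : X) : Set X :=
  {x | ∃ l : ℝ, 0 < l ∧ w l x x₀ < ⊤}

noncomputable def modularMetric (w : ℝ → X → X → ℝ≥0∞) (x y : X) : ℝ :=
  sInf {l : ℝ | 0 < l ∧ w l x y ≤ 1}

theorem le_ofReal_div_mul (hconv : IsConvex w) (hdiag : ∀ l : ℝ, 0 < l → ∀ y, w l y y = 0)
    {l m : ℝ} (hl : 0 < l) (hlm : l < m) (x y : X) :
    w m x y ≤ ENNReal.ofReal (l / m) * w l x y := by
  have h := hconv l (m - l) hl (sub_pos.2 hlm) x y y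
  rwa [add_sub_cancel, hdiag (m - l) (sub_pos.2 hlm) y, mul_zero, add_zero] at h

theorem le_of_scale_le (hconv : IsConvex w) (hdiag : ∀ l : ℝ, 0 < l → ∀ y, w l y y = 0)
    {l m : ℝ} (hl : 0 < l) (hlm : l ≤ m) (x y : X) : w m x y ≤ w l x y := by
  rcases hlm.eq_or_lt with rfl | hlt
  · exact le_rfl
  calc w m x y ≤ ENNReal.ofReal (l / m) * w l x y := le_ofReal_div_mul hconv hdiag hl hlt x y
    _ ≤ 1 * w l x y := by
        gcongr
        exact ENNReal.ofReal_le_one.2 (div_le_one_of_le₀ hlm (hl.trans hlt).le)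
    _ = w l x y := one_mul _

theorem add_lt_top (hconv : IsConvex w) {a b : ℝ} (ha : 0 < a) (hb : 0 < b) {x y z : X}
    (hx : w a x z < ⊤) (hy : w b y z < ⊤) : w (a + b) x y < ⊤ :=
  (hconv a b ha hb x y z).trans_lt <| ENNReal.add_lt_top.2
    ⟨ENNReal.mul_lt_top ofReal_lt_top hx, ENNReal.mul_lt_top ofReal_lt_top hy⟩

theorem exists_le_one_of_lt_top (hconv : IsConvex w)
    (hdiag : ∀ l : ℝ, 0 < l → ∀ y, w l y y = 0) {a : ℝ} (ha : 0 < a) {x y : X}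
    (h : w a x y < ⊤) : ∃ l : ℝ, 0 < l ∧ w l x y ≤ 1 := by
  set c : ℝ := (w a x y).toReal
  have hc : 0 ≤ c := ENNReal.toReal_nonneg
  have hwc : w a x y = ENNReal.ofReal c := (ENNReal.ofReal_toReal h.ne).symm
  refine ⟨a * (c + 2), by positivity, ?_⟩
  calc w (a * (c + 2)) x y ≤ ENNReal.ofReal (a / (a * (c + 2))) * w a x y :=
        le_ofReal_div_mul hconv hdiag ha (by nlinarith) x y
    _ = ENNReal.ofReal (c / (c + 2)) := by
        rw [hwc, ← ENNReal.ofReal_mul (by positivity)]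
        congr 1
        field_simp
    _ ≤ 1 := ENNReal.ofReal_le_one.2 (div_le_one_of_le₀ (by linarith) (by linarith))

theorem exists_le_one_of_mem_modularSpace (hconv : IsConvex w)
    (hdiag : ∀ l : ℝ, 0 < l → ∀ y, w l y y = 0) {x₀ x y : X} (hx : x ∈ modularSpace w x₀)
    (hy : y ∈ modularSpace w x₀) : ∃ l : ℝ, 0 < l ∧ w l x y ≤ 1 := by
  obtain ⟨a, ha, hxa⟩ := hx
  obtain ⟨b, hb, hyb⟩ := hy
  exact exists_le_one_of_lt_top hconv hdiag (add_pos ha hb) (add_lt_top hconv ha hb hxa hyb)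

theorem modularMetric_nonneg (x y : X) : 0 ≤ modularMetric w x y :=
  Real.sInf_nonneg fun _ hl => hl.1.le

theorem modularMetric_le {l : ℝ} {x y : X} (hl : 0 < l) (h : w l x y ≤ 1) :
    modularMetric w x y ≤ l :=
  csInf_le ⟨0, fun _ ht => ht.1.le⟩ ⟨hl, h⟩

theorem le_one_of_modularMetric_lt (hconv : IsConvex w)
    (hdiag : ∀ l : ℝ, 0 < l → ∀ y, w l y y = 0) {l : ℝ} {x y : X}
    (hne : ∃ l : ℝ, 0 < l ∧ w l x y ≤ 1) (h : modularMetric w x y < l) : w l x y ≤ 1 := by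
  obtain ⟨t, ⟨ht, htw⟩, htl⟩ := (csInf_lt_iff ⟨0, fun _ hs => hs.1.le⟩ hne).1 h
  exact (le_of_scale_le hconv hdiag ht htl.le x y).trans htw

theorem le_ofReal_of_modularMetric_lt (hconv : IsConvex w)
    (hdiag : ∀ l : ℝ, 0 < l → ∀ y, w l y y = 0) {t l : ℝ} {x y : X}
    (hne : ∃ l : ℝ, 0 < l ∧ w l x y ≤ 1) (ht : 0 < t) (htl : t < l)
    (h : modularMetric w x y < t) : w l x y ≤ ENNReal.ofReal (t / l) :=
  calc w l x y ≤ ENNReal.ofReal (t / l) * w t x y := le_ofReal_div_mul hconv hdiag ht htl x y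
    _ ≤ ENNReal.ofReal (t / l) * 1 := by gcongr; exact le_one_of_modularMetric_lt hconv hdiag hne h
    _ = ENNReal.ofReal (t / l) := mul_one _

theorem tendsto_modularMetric_zero_iff (hconv : IsConvex w)
    (hdiag : ∀ l : ℝ, 0 < l → ∀ y, w l y y = 0) {f : Filter ι} {xs : ι → X} {x : X}
    (hne : ∀ n, ∃ l : ℝ, 0 < l ∧ w l (xs n) x ≤ 1) :
    Tendsto (fun n => modularMetric w (xs n) x) f (𝓝 0) ↔
      ∀ l : ℝ, 0 < l → Tendsto (fun n => w l (xs n) x) f (𝓝 0) := by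
  constructor
  · intro hd l hl
    refine ENNReal.tendsto_nhds_zero.2 fun ε hε => ?_
    obtain ⟨r, -, hr, hrε⟩ := ENNReal.lt_iff_exists_real_btwn.1 hε
    have hr : 0 < r := ENNReal.ofReal_pos.1 hr
    have ht : 0 < l * r / (r + 1) := by positivity
    have htl : l * r / (r + 1) < l := by
      rw [div_lt_iff₀ (by positivity)]
      nlinarith
    filter_upwards [hd.eventually_lt_const ht] with n hn
    calc w l (xs n) x ≤ ENNReal.ofReal (l * r / (r + 1) / l) :=
          le_ofReal_of_modularMetric_lt hconv hdiag (hne n) ht htl hn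
      _ ≤ ENNReal.ofReal r := by
          gcongr
          rw [mul_div_assoc, mul_div_cancel_left₀ _ hl.ne']
          exact div_le_self hr.le (by linarith)
      _ ≤ ε := hrε.le
  · intro hw
    refine tendsto_order.2 ⟨fun a ha => Eventually.of_forall fun n =>
      ha.trans_le (modularMetric_nonneg _ _), fun a ha => ?_⟩
    filter_upwards [ENNReal.tendsto_nhds_zero.1 (hw (a / 2) (half_pos ha)) 1 one_pos] with n hn
    exact (modularMetric_le (half_pos ha) hn).trans_lt (half_lt_self ha)

theorem tendsto_of_tendsto_halving (hconv : IsConvex w)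
    (hdiag : ∀ l : ℝ, 0 < l → ∀ y, w l y y = 0) {f : Filter ι} {xs : ι → X} {x : X}
    (hhalf : ∀ l : ℝ, 0 < l → Tendsto (fun n => w l (xs n) x) f (𝓝 0) →
      Tendsto (fun n => w (l / 2) (xs n) x) f (𝓝 0))
    {l : ℝ} (hl : 0 < l) (h : Tendsto (fun n => w l (xs n) x) f (𝓝 0))
    {m : ℝ} (hm : 0 < m) : Tendsto (fun n => w m (xs n) x) f (𝓝 0) := by
  have hpow : ∀ k : ℕ, Tendsto (fun n => w (l / 2 ^ k) (xs n) x) f (𝓝 0) := by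
    intro k
    induction k with
    | zero => simpa using h
    | succ k ih => simpa [pow_succ, div_div] using hhalf _ (by positivity) ih
  obtain ⟨k, hk⟩ : ∃ k : ℕ, l / m < 2 ^ k := pow_unbounded_of_one_lt _ one_lt_two
  have hkm : l / 2 ^ k ≤ m := by
    rw [div_lt_iff₀ hm] at hk
    rw [div_le_iff₀ (by positivity)]
    linarith
  exact tendsto_of_tendsto_of_tendsto_of_le_of_le tendsto_const_nhds (hpow k)
    (fun _ => zero_le) fun n => le_of_scale_le hconv hdiag (by positivity) hkm _ _

end ConvexModular

open ConvexModular in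
theorem stmt11_general {X : Type*} (w : ℝ → X → X → ℝ≥0∞) (x₀ : X)
    (hdeg : ∀ x y : X, x = y ↔ (∀ l : ℝ, 0 < l → w l x y = 0))
    (hconv : ∀ l m : ℝ, 0 < l → 0 < m → ∀ x y z : X,
      w (l + m) x y ≤ ENNReal.ofReal (l / (l + m)) * w l x z
        + ENNReal.ofReal (m / (l + m)) * w m y z)
    (S : Set X) (hS : S = {x : X | ∃ l : ℝ, 0 < l ∧ w l x x₀ < ⊤})
    (dstar : X → X → ℝ)
    (hd : ∀ x y : X, dstar x y = sInf {l : ℝ | 0 < l ∧ w l x y ≤ 1}) :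
    (∀ (xs : ℕ → X), (∀ n, xs n ∈ S) → ∀ x ∈ S,
        (Tendsto (fun n => dstar (xs n) x) atTop (nhds 0) ↔
          ∃ l : ℝ, 0 < l ∧ Tendsto (fun n => w l (xs n) x) atTop (nhds 0))) ↔
    (∀ (xs : ℕ → X), (∀ n, xs n ∈ S) → ∀ x ∈ S, ∀ l : ℝ, 0 < l →
        Tendsto (fun n => w l (xs n) x) atTop (nhds 0) →
        Tendsto (fun n => w (l / 2) (xs n) x) atTop (nhds 0)) := by
  have hdiag : ∀ l : ℝ, 0 < l → ∀ y, w l y y = 0 := fun l hl y => (hdeg y y).1 rfl l hl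
  obtain rfl : dstar = modularMetric w := funext₂ hd
  obtain rfl : S = modularSpace w x₀ := hS
  have hmetric : ∀ xs : ℕ → X, (∀ n, xs n ∈ modularSpace w x₀) → ∀ x ∈ modularSpace w x₀,
      (Tendsto (fun n => modularMetric w (xs n) x) atTop (𝓝 0) ↔
        ∀ l : ℝ, 0 < l → Tendsto (fun n => w l (xs n) x) atTop (𝓝 0)) :=
    fun xs hxs x hx => tendsto_modularMetric_zero_iff hconv hdiag
      fun n => exists_le_one_of_mem_modularSpace hconv hdiag (hxs n) hx
  constructor
  · intro H xs hxs x hx l hl hw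
    exact (hmetric xs hxs x hx).1 ((H xs hxs x hx).2 ⟨l, hl, hw⟩) _ (half_pos hl)
  · intro H xs hxs x hx
    rw [hmetric xs hxs x hx]
    exact ⟨fun h => ⟨1, one_pos, h 1 one_pos⟩, fun ⟨l, hl, h⟩ m hm =>
      tendsto_of_tendsto_halving hconv hdiag (H xs hxs x hx) hl h hm⟩

/-- For a convex modular `w`, metric convergence with respect to `d_w*`
coincides with modular convergence on `X_w*` iff `w` satisfies the Δ₂-condition. -/
theorem stmt11 {X : Type*} (w : ℝ → X → X → ℝ≥0∞) (x₀ : X)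
    (hdeg : ∀ x y : X, x = y ↔ (∀ l : ℝ, 0 < l → w l x y = 0))
    (hsym : ∀ l : ℝ, 0 < l → ∀ x y : X, w l x y = w l y x)
    (hconv : ∀ l m : ℝ, 0 < l → 0 < m → ∀ x y z : X,
      w (l + m) x y ≤ ENNReal.ofReal (l / (l + m)) * w l x z
        + ENNReal.ofReal (m / (l + m)) * w m y z)
    (S : Set X) (hS : S = {x : X | ∃ l : ℝ, 0 < l ∧ w l x x₀ < ⊤})
    (dstar : X → X → ℝ)
    (hd : ∀ x y : X, dstar x y = sInf {l : ℝ | 0 < l ∧ w l x y ≤ 1}) :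
    (∀ (xs : ℕ → X), (∀ n, xs n ∈ S) → ∀ x ∈ S,
        (Tendsto (fun n => dstar (xs n) x) atTop (nhds 0) ↔
          ∃ l : ℝ, 0 < l ∧ Tendsto (fun n => w l (xs n) x) atTop (nhds 0))) ↔
    (∀ (xs : ℕ → X), (∀ n, xs n ∈ S) → ∀ x ∈ S, ∀ l : ℝ, 0 < l →
        Tendsto (fun n => w l (xs n) x) atTop (nhds 0) →
        Tendsto (fun n => w (l / 2) (xs n) x) atTop (nhds 0)) :=
  stmt11_general w x₀ hdeg hconv S hS dstar hd
end

section
/- Let w be a convex modular on X, T:X_w*→X_w*, k>0, and x,y∈X_w*. Then d_w*(Tx,Ty) ≤ k·d_w*(x,y) if and only if for every λ>0 with w_λ(x,y)≤1 one has the right limit w_{kλ+0}(Tx,Ty) := lim_{μ→kλ+} w_μ(Tx,Ty) ≤ 1. -/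
open ENNReal

/-! Convexity with `z = y` and `w_{m-l}(y,y) = 0` gives `w_m ≤ (l/m) w_l` for `l < m`, so
`λ ↦ w_λ(x,y)` is antitone and, once finite, drops below `1`; on `X_w*` the defining set of
`d_w*` is therefore a nonempty up-ray (possibly open at its infimum). Hence `d_w* ≤ r` iff
`w_μ ≤ 1` for all `μ > r`, and `μ > k·d_w*(x,y)` iff `μ > kλ` for some admissible `λ`. -/

section Modular

variable {X : Type*} {w : ℝ → X → X → ℝ≥0∞}

theorem modular_le_ofReal_div_mul (hzero : ∀ l, 0 < l → ∀ a, w l a a = 0)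
    (hconv : ∀ l m : ℝ, 0 < l → 0 < m → ∀ x y z : X,
      w (l + m) x y ≤ ENNReal.ofReal (l / (l + m)) * w l x z
        + ENNReal.ofReal (m / (l + m)) * w m y z)
    (a b : X) {l m : ℝ} (hl : 0 < l) (hlm : l < m) :
    w m a b ≤ ENNReal.ofReal (l / m) * w l a b := by
  have h := hconv l (m - l) hl (sub_pos.mpr hlm) a b b
  rwa [hzero _ (sub_pos.mpr hlm), mul_zero, add_zero, add_sub_cancel] at h

theorem modular_antitoneOn (hzero : ∀ l, 0 < l → ∀ a, w l a a = 0)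
    (hconv : ∀ l m : ℝ, 0 < l → 0 < m → ∀ x y z : X,
      w (l + m) x y ≤ ENNReal.ofReal (l / (l + m)) * w l x z
        + ENNReal.ofReal (m / (l + m)) * w m y z)
    (a b : X) : AntitoneOn (fun l => w l a b) (Set.Ioi 0) := by
  intro l hl m _ hlm
  rcases hlm.eq_or_lt with rfl | hlt
  · exact le_rfl
  calc w m a b ≤ ENNReal.ofReal (l / m) * w l a b :=
        modular_le_ofReal_div_mul hzero hconv a b hl hlt
    _ ≤ 1 * w l a b := by
        gcongr
        exact ENNReal.ofReal_le_one.mpr ((div_le_one (hl.trans hlt)).mpr hlt.le)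
    _ = w l a b := one_mul _

theorem exists_modular_le_one_of_lt_top (hzero : ∀ l, 0 < l → ∀ a, w l a a = 0)
    (hconv : ∀ l m : ℝ, 0 < l → 0 < m → ∀ x y z : X,
      w (l + m) x y ≤ ENNReal.ofReal (l / (l + m)) * w l x z
        + ENNReal.ofReal (m / (l + m)) * w m y z)
    {a b : X} {c : ℝ} (hc : 0 < c) (hfin : w c a b < ⊤) :
    ∃ l, 0 < l ∧ w l a b ≤ 1 := by
  obtain ⟨t, ht, hw⟩ : ∃ t : ℝ, 0 ≤ t ∧ w c a b = ENNReal.ofReal t :=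
    ⟨_, ENNReal.toReal_nonneg, (ENNReal.ofReal_toReal hfin.ne).symm⟩
  -- at `l = c (t + 2)` the bound `(c / l) · w_c = t / (t + 2)` is below `1`
  refine ⟨c * (t + 2), by positivity, ?_⟩
  calc w (c * (t + 2)) a b ≤ ENNReal.ofReal (c / (c * (t + 2))) * w c a b :=
        modular_le_ofReal_div_mul hzero hconv a b hc (by nlinarith)
    _ = ENNReal.ofReal (t / (t + 2)) := by
        rw [hw, ← ENNReal.ofReal_mul (by positivity)]
        congr 1
        field_simp
    _ ≤ 1 := ENNReal.ofReal_le_one.mpr ((div_le_one (by linarith)).mpr (by linarith))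

theorem exists_modular_lt_top
    (hconv : ∀ l m : ℝ, 0 < l → 0 < m → ∀ x y z : X,
      w (l + m) x y ≤ ENNReal.ofReal (l / (l + m)) * w l x z
        + ENNReal.ofReal (m / (l + m)) * w m y z)
    {a b z : X} (ha : ∃ l, 0 < l ∧ w l a z < ⊤) (hb : ∃ l, 0 < l ∧ w l b z < ⊤) :
    ∃ c, 0 < c ∧ w c a b < ⊤ := by
  obtain ⟨p, hp, hpa⟩ := ha
  obtain ⟨q, hq, hqb⟩ := hb
  refine ⟨p + q, add_pos hp hq, (hconv p q hp hq a b z).trans_lt ?_⟩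
  exact ENNReal.add_lt_top.mpr
    ⟨ENNReal.mul_lt_top ofReal_lt_top hpa, ENNReal.mul_lt_top ofReal_lt_top hqb⟩

end Modular

theorem sInf_le_iff_forall_gt_of_antitoneOn {f : ℝ → ℝ≥0∞} (hf : AntitoneOn f (Set.Ioi 0))
    (hne : ∃ l, 0 < l ∧ f l ≤ 1) {r : ℝ} (hr : 0 ≤ r) :
    sInf {l | 0 < l ∧ f l ≤ 1} ≤ r ↔ ∀ m, r < m → f m ≤ 1 := by
  have hbdd : BddBelow {l | 0 < l ∧ f l ≤ 1} := ⟨0, fun _ hl => hl.1.le⟩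
  constructor
  · intro h m hm
    obtain ⟨l, ⟨hl, hfl⟩, hlm⟩ := exists_lt_of_csInf_lt hne (h.trans_lt hm)
    exact (hf hl (hl.trans hlm) hlm.le).trans hfl
  · intro h
    refine le_of_forall_gt_imp_ge_of_dense fun m hm => csInf_le hbdd ⟨hr.trans_lt hm, h m hm⟩

theorem forall_gt_mul_sInf_iff {A : Set ℝ} (hne : A.Nonempty) (hbdd : BddBelow A) {k : ℝ}
    (hk : 0 < k) {P : ℝ → Prop} :
    (∀ m, k * sInf A < m → P m) ↔ ∀ l ∈ A, ∀ m, k * l < m → P m := by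
  constructor
  · intro h l hl m hm
    exact h m (lt_of_le_of_lt (mul_le_mul_of_nonneg_left (csInf_le hbdd hl) hk.le) hm)
  · intro h m hm
    obtain ⟨l, hl, hlm⟩ := exists_lt_of_csInf_lt hne ((lt_div_iff₀' hk).mpr hm)
    exact h l hl m ((lt_div_iff₀' hk).mp hlm)

theorem stmt14_general {X : Type*} (w : ℝ → X → X → ℝ≥0∞) (x₀ : X)
    (hdeg : ∀ x y : X, x = y ↔ (∀ l : ℝ, 0 < l → w l x y = 0))
    (hconv : ∀ l m : ℝ, 0 < l → 0 < m → ∀ x y z : X,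
      w (l + m) x y ≤ ENNReal.ofReal (l / (l + m)) * w l x z
        + ENNReal.ofReal (m / (l + m)) * w m y z)
    (S : Set X) (hS : S = {x : X | ∃ l : ℝ, 0 < l ∧ w l x x₀ < ⊤})
    (dstar : X → X → ℝ)
    (hd : ∀ x y : X, dstar x y = sInf {l : ℝ | 0 < l ∧ w l x y ≤ 1})
    (T : X → X) (hT : ∀ x ∈ S, T x ∈ S)
    (k : ℝ) (hk : 0 < k)
    (x : X) (hx : x ∈ S) (y : X) (hy : y ∈ S) :
    dstar (T x) (T y) ≤ k * dstar x y ↔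
      ∀ l : ℝ, 0 < l → w l x y ≤ 1 →
        (⨆ m ∈ Set.Ioi (k * l), w m (T x) (T y)) ≤ 1 := by
  have hzero : ∀ l, 0 < l → ∀ a, w l a a = 0 := fun l hl a => (hdeg a a).mp rfl l hl
  have hadm : ∀ a ∈ S, ∀ b ∈ S, ∃ l, 0 < l ∧ w l a b ≤ 1 := by
    intro a ha b hb
    rw [hS] at ha hb
    obtain ⟨c, hc, hfin⟩ := exists_modular_lt_top hconv ha hb
    exact exists_modular_le_one_of_lt_top hzero hconv hc hfin
  have hd_nonneg : 0 ≤ dstar x y := by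
    rw [hd]
    exact Real.sInf_nonneg fun _ hl => hl.1.le
  rw [hd (T x), sInf_le_iff_forall_gt_of_antitoneOn (modular_antitoneOn hzero hconv _ _)
      (hadm _ (hT x hx) _ (hT y hy)) (mul_nonneg hk.le hd_nonneg), hd x y,
    forall_gt_mul_sInf_iff (hadm x hx y hy) ⟨0, fun _ hl => hl.1.le⟩ hk
      (A := {l | 0 < l ∧ w l x y ≤ 1}) (P := fun m => w m (T x) (T y) ≤ 1)]
  simp only [Set.mem_ofPred_eq, and_imp, iSup₂_le_iff, Set.mem_Ioi]

/-- Characterization of Lipschitz maps for `d_w*`: `d_w*(Tx,Ty) ≤ k·d_w*(x,y)` iff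
for every `λ > 0` with `w_λ(x,y) ≤ 1` the right limit `w_{kλ+0}(Tx,Ty) ≤ 1`.
Since `μ ↦ w_μ` is nonincreasing, the right limit at `kλ` equals `⨆ μ > kλ, w_μ`. -/
theorem stmt14 {X : Type*} (w : ℝ → X → X → ℝ≥0∞) (x₀ : X)
    (hdeg : ∀ x y : X, x = y ↔ (∀ l : ℝ, 0 < l → w l x y = 0))
    (hsym : ∀ l : ℝ, 0 < l → ∀ x y : X, w l x y = w l y x)
    (hconv : ∀ l m : ℝ, 0 < l → 0 < m → ∀ x y z : X,
      w (l + m) x y ≤ ENNReal.ofReal (l / (l + m)) * w l x z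
        + ENNReal.ofReal (m / (l + m)) * w m y z)
    (S : Set X) (hS : S = {x : X | ∃ l : ℝ, 0 < l ∧ w l x x₀ < ⊤})
    (dstar : X → X → ℝ)
    (hd : ∀ x y : X, dstar x y = sInf {l : ℝ | 0 < l ∧ w l x y ≤ 1})
    (T : X → X) (hT : ∀ x ∈ S, T x ∈ S)
    (k : ℝ) (hk : 0 < k)
    (x : X) (hx : x ∈ S) (y : X) (hy : y ∈ S) :
    dstar (T x) (T y) ≤ k * dstar x y ↔
      ∀ l : ℝ, 0 < l → w l x y ≤ 1 →
        (⨆ m ∈ Set.Ioi (k * l), w m (T x) (T y)) ≤ 1 :=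
  stmt14_general w x₀ hdeg hconv S hS dstar hd T hT k hk x hx y hy
end

section
/- Let w be a modular on X, k>0, T:X_w*→X_w*, and x,y∈X_w*. Then d_w(Tx,Ty) ≤ k·d_w(x,y) if and only if w_{kλ+0}(Tx,Ty) ≤ kλ for all λ>0 such that w_λ(x,y) ≤ λ, where d_w(x,y)=inf{λ>0 : w_λ(x,y)≤λ} and w_{kλ+0} denotes the right limit in the parameter. -/
/-!
By the triangle inequality and `w_λ(z,z) = 0`, `λ ↦ w_λ(x,y)` is antitone, so the set of
admissible parameters `{λ > 0 | w_λ(x,y) ≤ λ}` is an up-set. Hence `d_w(x,y) ≤ c` holds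
exactly when every `μ > c` is admissible, i.e. when `w_{c+0}(x,y) ≤ c`. Applying this with
`c = kλ` for each admissible `λ` of `(x,y)` gives the characterization; on `X_w*` all these sets
are nonempty.
-/

open ENNReal Set

def admissibleParams (f : ℝ → ℝ≥0∞) : Set ℝ := {l | 0 < l ∧ f l ≤ ENNReal.ofReal l}

lemma bddBelow_admissibleParams (f : ℝ → ℝ≥0∞) : BddBelow (admissibleParams f) :=
  ⟨0, fun _ hl => hl.1.le⟩

lemma admissibleParams_nonempty {f : ℝ → ℝ≥0∞} (hf : AntitoneOn f (Ioi 0)) {l : ℝ}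
    (hl : 0 < l) (hfin : f l < ⊤) : (admissibleParams f).Nonempty := by
  set c := max l (f l).toReal
  have hlc : l ≤ c := le_max_left _ _
  refine ⟨c, hl.trans_le hlc, ?_⟩
  calc f c ≤ f l := hf hl (hl.trans_le hlc) hlc
    _ = ENNReal.ofReal (f l).toReal := (ENNReal.ofReal_toReal hfin.ne).symm
    _ ≤ ENNReal.ofReal c := ENNReal.ofReal_le_ofReal (le_max_right _ _)

/-- `w_{c+0}` is encoded as `⨆ m > c, f m`, the right limit of the antitone `f` at `c`. -/
lemma sInf_admissibleParams_le_iff {f : ℝ → ℝ≥0∞} (hf : AntitoneOn f (Ioi 0))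
    (hne : (admissibleParams f).Nonempty) {c : ℝ} (hc : 0 ≤ c) :
    sInf (admissibleParams f) ≤ c ↔ (⨆ m ∈ Ioi c, f m) ≤ ENNReal.ofReal c := by
  constructor
  · intro h
    refine iSup₂_le fun m (hm : c < m) => ENNReal.le_of_forall_pos_le_add fun ε hε _ => ?_
    obtain ⟨l, ⟨hl, hfl⟩, hlt⟩ := exists_lt_of_csInf_lt hne
      (h.trans_lt (lt_min hm (lt_add_of_pos_right c (NNReal.coe_pos.mpr hε))))
    have hlm : l < m := hlt.trans_le (min_le_left _ _)
    have hlc : l < c + ε := hlt.trans_le (min_le_right _ _)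
    calc f m ≤ f l := hf hl (hl.trans hlm) hlm.le
      _ ≤ ENNReal.ofReal l := hfl
      _ ≤ ENNReal.ofReal (c + ε) := ENNReal.ofReal_le_ofReal hlc.le
      _ = ENNReal.ofReal c + ε := by
        rw [ENNReal.ofReal_add hc ε.coe_nonneg, ENNReal.ofReal_coe_nnreal]
  · intro h
    refine le_of_forall_gt_imp_ge_of_dense fun m (hm : c < m) =>
      csInf_le (bddBelow_admissibleParams f) ⟨hc.trans_lt hm, ?_⟩
    calc f m ≤ ⨆ m ∈ Ioi c, f m := le_iSup₂ (f := fun m (_ : m ∈ Ioi c) => f m) m hm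
      _ ≤ ENNReal.ofReal c := h
      _ ≤ ENNReal.ofReal m := ENNReal.ofReal_le_ofReal hm.le

section Modular

variable {X : Type*} {w : ℝ → X → X → ℝ≥0∞}

lemma antitoneOn_modular (hzero : ∀ (z : X) (l : ℝ), 0 < l → w l z z = 0)
    (htri : ∀ l m : ℝ, 0 < l → 0 < m → ∀ x y z : X, w (l + m) x y ≤ w l x z + w m z y)
    (x y : X) : AntitoneOn (fun l => w l x y) (Ioi 0) := by
  intro l (hl : 0 < l) m _ hlm
  rcases hlm.eq_or_lt with rfl | hlm
  · rfl
  · calc w m x y = w (l + (m - l)) x y := by rw [add_sub_cancel]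
      _ ≤ w l x y + w (m - l) y y := htri l (m - l) hl (sub_pos.mpr hlm) x y y
      _ = w l x y := by rw [hzero y (m - l) (sub_pos.mpr hlm), add_zero]

lemma modular_add_lt_top (hsym : ∀ l : ℝ, 0 < l → ∀ x y : X, w l x y = w l y x)
    (htri : ∀ l m : ℝ, 0 < l → 0 < m → ∀ x y z : X, w (l + m) x y ≤ w l x z + w m z y)
    {x y x₀ : X} {l m : ℝ} (hl : 0 < l) (hm : 0 < m) (hx : w l x x₀ < ⊤)
    (hy : w m y x₀ < ⊤) : w (l + m) x y < ⊤ :=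
  (htri l m hl hm x y x₀).trans_lt <| ENNReal.add_lt_top.mpr ⟨hx, hsym m hm x₀ y ▸ hy⟩

end Modular

/-- Characterization of Lipschitz maps for `d_w`: `d_w(Tx,Ty) ≤ k·d_w(x,y)` iff
`w_{kλ+0}(Tx,Ty) ≤ kλ` for all `λ > 0` such that `w_λ(x,y) ≤ λ`.
Since `μ ↦ w_μ` is nonincreasing, the right limit at `kλ` equals `⨆ μ > kλ, w_μ`. -/
theorem stmt16 {X : Type*} (w : ℝ → X → X → ℝ≥0∞) (x₀ : X)
    (hdeg : ∀ x y : X, x = y ↔ (∀ l : ℝ, 0 < l → w l x y = 0))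
    (hsym : ∀ l : ℝ, 0 < l → ∀ x y : X, w l x y = w l y x)
    (htri : ∀ l m : ℝ, 0 < l → 0 < m → ∀ x y z : X,
      w (l + m) x y ≤ w l x z + w m z y)
    (S : Set X) (hS : S = {x : X | ∃ l : ℝ, 0 < l ∧ w l x x₀ < ⊤})
    (dw : X → X → ℝ)
    (hd : ∀ x y : X, dw x y = sInf {l : ℝ | 0 < l ∧ w l x y ≤ ENNReal.ofReal l})
    (T : X → X) (hT : ∀ x ∈ S, T x ∈ S)
    (k : ℝ) (hk : 0 < k)
    (x : X) (hx : x ∈ S) (y : X) (hy : y ∈ S) :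
    dw (T x) (T y) ≤ k * dw x y ↔
      ∀ l : ℝ, 0 < l → w l x y ≤ ENNReal.ofReal l →
        (⨆ m ∈ Set.Ioi (k * l), w m (T x) (T y)) ≤ ENNReal.ofReal (k * l) := by
  have hanti := antitoneOn_modular (fun z l hl => (hdeg z z).mp rfl l hl) htri
  have hne : ∀ a ∈ S, ∀ b ∈ S, (admissibleParams fun l => w l a b).Nonempty := by
    rw [hS]
    rintro a ⟨l, hl, ha⟩ b ⟨m, hm, hb⟩
    exact admissibleParams_nonempty (hanti a b) (add_pos hl hm)
      (modular_add_lt_top hsym htri hl hm ha hb)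
  have hd' : ∀ a b, dw a b = sInf (admissibleParams fun l => w l a b) := hd
  rw [hd' x y, hd', ← div_le_iff₀' hk,
    le_csInf_iff (bddBelow_admissibleParams _) (hne x hx y hy)]
  refine forall_congr' fun l => ?_
  simp only [admissibleParams, mem_ofPred_eq, and_imp]
  refine imp_congr_right fun hl => imp_congr_right fun _ => ?_
  rw [div_le_iff₀' hk]
  exact sInf_admissibleParams_le_iff (hanti _ _) (hne _ (hT x hx) _ (hT y hy)) (mul_pos hk hl).le
end

section
/- Let w be a strict convex modular on X such that X_w* is modular complete, and let T:X_w*→X_w* be modular contractive: there exist 0<k<1 and λ₀>0 with w_{kλ}(Tx,Ty) ≤ w_λ(x,y) for all 0<λ≤λ₀ and x,y∈X_w*. Assume also that for each λ>0 there exists x∈X_w* with w_λ(x,Tx)<∞. Then T has a fixed point x*∈X_w*. -/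
open ENNReal Filter

/-!
Starting from a point `x` with `w_{(1-k)λ₀}(x, Tx) = C < ∞`, the contraction gives
`w_{kⁿ(1-k)λ₀}(Tⁿx, Tⁿ⁺¹x) ≤ C`, and convexity chains these steps into
`w_s(Tⁿx, Tᵐx) ≤ C` with `s = ∑_{n ≤ i < m} kⁱ(1-k)λ₀ ≤ kⁿλ₀`. Convexity against the zero
`w_μ(b, b) = 0` makes `w` decrease like `μ/ν` in its parameter, so `w_{λ₀}(Tⁿx, Tᵐx) ≤ kⁿC`
and the orbit is modular Cauchy. If it converges to `y` with parameter `λ₀`, the contraction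
makes it converge to `Ty` with parameter `kλ₀`; convexity through the orbit then gives
`w_{λ₀ + kλ₀}(y, Ty) = 0`, so `Ty = y` by strictness.
-/

structure IsConvexModular {X : Type*} (w : ℝ → X → X → ℝ≥0∞) : Prop where
  self_eq_zero : ∀ l : ℝ, 0 < l → ∀ x : X, w l x x = 0
  symm : ∀ l : ℝ, 0 < l → ∀ x y : X, w l x y = w l y x
  le_convex : ∀ l m : ℝ, 0 < l → 0 < m → ∀ x y z : X,
    w (l + m) x y ≤ ENNReal.ofReal (l / (l + m)) * w l x z
      + ENNReal.ofReal (m / (l + m)) * w m y z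

namespace IsConvexModular

variable {X : Type*} {w : ℝ → X → X → ℝ≥0∞}

theorem le_ofReal_div_mul (hw : IsConvexModular w) {μ ν : ℝ} (hμ : 0 < μ) (hμν : μ ≤ ν)
    (a b : X) : w ν a b ≤ ENNReal.ofReal (μ / ν) * w μ a b := by
  rcases hμν.eq_or_lt with rfl | hlt
  · rw [div_self hμ.ne', ENNReal.ofReal_one, one_mul]
  · have h := hw.le_convex μ (ν - μ) hμ (sub_pos.2 hlt) a b b
    rwa [hw.self_eq_zero _ (sub_pos.2 hlt), mul_zero, add_zero, add_sub_cancel] at h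

theorem add_le_of_le (hw : IsConvexModular w) {l m : ℝ} (hl : 0 < l) (hm : 0 < m)
    {x y z : X} {C : ℝ≥0∞} (hx : w l x z ≤ C) (hy : w m y z ≤ C) : w (l + m) x y ≤ C := by
  have hlm : 0 < l + m := add_pos hl hm
  calc w (l + m) x y
      ≤ ENNReal.ofReal (l / (l + m)) * w l x z + ENNReal.ofReal (m / (l + m)) * w m y z :=
        hw.le_convex l m hl hm x y z
    _ ≤ ENNReal.ofReal (l / (l + m)) * C + ENNReal.ofReal (m / (l + m)) * C := by gcongr
    _ = C := by
        rw [← add_mul, ← ENNReal.ofReal_add (by positivity) (by positivity), ← add_div,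
          div_self hlm.ne', ENNReal.ofReal_one, one_mul]

theorem sum_Ico_le (hw : IsConvexModular w) {xs : ℕ → X} {a : ℕ → ℝ} (ha : ∀ i, 0 < a i)
    {C : ℝ≥0∞} (hC : ∀ i, w (a i) (xs i) (xs (i + 1)) ≤ C) {n m : ℕ} (hnm : n < m) :
    w (∑ i ∈ Finset.Ico n m, a i) (xs n) (xs m) ≤ C := by
  induction m, hnm using Nat.le_induction with
  | base => simpa using hC n
  | succ m hnm ih =>
    rw [Finset.sum_Ico_succ_top (Nat.le_of_succ_le hnm)]
    have hsum : 0 < ∑ i ∈ Finset.Ico n m, a i :=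
      Finset.sum_pos (fun i _ => ha i) (Finset.nonempty_Ico.2 hnm)
    exact hw.add_le_of_le hsum (ha m) ih (by rw [hw.symm _ (ha m)]; exact hC m)

theorem tendsto_prod_atTop_zero_of_le (hw : IsConvexModular w) {l : ℝ} (hl : 0 < l) {xs : ℕ → X}
    {b : ℕ → ℝ≥0∞} (hb : Tendsto b atTop (nhds 0))
    (hle : ∀ n m, n < m → w l (xs n) (xs m) ≤ b n) :
    Tendsto (fun p : ℕ × ℕ => w l (xs p.1) (xs p.2)) atTop (nhds 0) := by
  have hmin : Tendsto (fun p : ℕ × ℕ => min p.1 p.2) atTop atTop :=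
    tendsto_atTop_atTop.2 fun c => ⟨(c, c), fun p hp => le_min hp.1 hp.2⟩
  refine tendsto_of_tendsto_of_tendsto_of_le_of_le tendsto_const_nhds (hb.comp hmin)
    (fun _ => zero_le) fun ⟨n, m⟩ => ?_
  rcases lt_trichotomy n m with h | rfl | h
  · simpa [min_eq_left h.le] using hle n m h
  · simp [hw.self_eq_zero l hl]
  · simpa [min_eq_right h.le, hw.symm l hl (xs n)] using hle m n h

theorem add_eq_zero_of_tendsto (hw : IsConvexModular w) {l m : ℝ} (hl : 0 < l) (hm : 0 < m)
    {xs : ℕ → X} {y z : X} (hy : Tendsto (fun n => w l (xs n) y) atTop (nhds 0))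
    (hz : Tendsto (fun n => w m (xs n) z) atTop (nhds 0)) : w (l + m) y z = 0 := by
  have hbound : ∀ n, w (l + m) y z ≤ ENNReal.ofReal (l / (l + m)) * w l (xs n) y
      + ENNReal.ofReal (m / (l + m)) * w m (xs n) z := fun n => by
    rw [hw.symm l hl (xs n), hw.symm m hm (xs n)]
    exact hw.le_convex l m hl hm y z (xs n)
  have hlim : Tendsto (fun n => ENNReal.ofReal (l / (l + m)) * w l (xs n) y
      + ENNReal.ofReal (m / (l + m)) * w m (xs n) z) atTop (nhds 0) := by
    simpa using (ENNReal.Tendsto.const_mul hy (Or.inr ENNReal.ofReal_ne_top)).add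
      (ENNReal.Tendsto.const_mul hz (Or.inr ENNReal.ofReal_ne_top))
  exact le_antisymm (ge_of_tendsto' hlim hbound) zero_le

end IsConvexModular

section Contraction

variable {X : Type*} {w : ℝ → X → X → ℝ≥0∞} {S : Set X} {T : X → X} {k l₀ : ℝ}

theorem iterate_le_of_modular_contraction (hT : ∀ x ∈ S, T x ∈ S) (hk : 0 < k) (hk1 : k ≤ 1)
    (hcontr : ∀ l : ℝ, 0 < l → l ≤ l₀ → ∀ x ∈ S, ∀ y ∈ S, w (k * l) (T x) (T y) ≤ w l x y)
    (n : ℕ) {l : ℝ} (hl : 0 < l) (hll₀ : l ≤ l₀) {x y : X} (hx : x ∈ S) (hy : y ∈ S) :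
    w (k ^ n * l) (T^[n] x) (T^[n] y) ≤ w l x y := by
  induction n generalizing l x y with
  | zero => simp
  | succ n ih =>
    have hkl : k * l ≤ l₀ := (mul_le_of_le_one_left hl.le hk1).trans hll₀
    calc w (k ^ (n + 1) * l) (T^[n + 1] x) (T^[n + 1] y)
        = w (k ^ n * (k * l)) (T^[n] (T x)) (T^[n] (T y)) := by rw [pow_succ, mul_assoc]; rfl
      _ ≤ w (k * l) (T x) (T y) := ih (mul_pos hk hl) hkl (hT x hx) (hT y hy)
      _ ≤ w l x y := hcontr l hl hll₀ x hx y hy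

theorem iterate_le_pow_mul_of_modular_contraction (hw : IsConvexModular w)
    (hT : ∀ x ∈ S, T x ∈ S) (hk : 0 < k) (hk1 : k < 1) (hl₀ : 0 < l₀)
    (hcontr : ∀ l : ℝ, 0 < l → l ≤ l₀ → ∀ x ∈ S, ∀ y ∈ S, w (k * l) (T x) (T y) ≤ w l x y)
    {x : X} (hx : x ∈ S) {n m : ℕ} (hnm : n < m) :
    w l₀ (T^[n] x) (T^[m] x) ≤ ENNReal.ofReal (k ^ n) * w ((1 - k) * l₀) x (T x) := by
  set l := (1 - k) * l₀ with hl_def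
  have hl : 0 < l := mul_pos (sub_pos.2 hk1) hl₀
  have hll₀ : l ≤ l₀ := mul_le_of_le_one_left hl₀.le (by linarith)
  have hstep : ∀ i, w (k ^ i * l) (T^[i] x) (T^[i + 1] x) ≤ w l x (T x) := fun i => by
    rw [Function.iterate_succ_apply]
    exact iterate_le_of_modular_contraction hT hk hk1.le hcontr i hl hll₀ hx (hT x hx)
  set s := ∑ i ∈ Finset.Ico n m, k ^ i * l
  have hs : 0 < s := Finset.sum_pos (fun i _ => by positivity) (Finset.nonempty_Ico.2 hnm)
  have hsl : s ≤ k ^ n * l₀ := by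
    calc s = (∑ i ∈ Finset.Ico n m, k ^ i) * l := (Finset.sum_mul ..).symm
      _ ≤ k ^ n / (1 - k) * l :=
          mul_le_mul_of_nonneg_right (geom_sum_Ico_le_of_lt_one hk.le hk1) hl.le
      _ = k ^ n * l₀ := by rw [hl_def]; field_simp [(sub_pos.2 hk1).ne']
  have hkn : k ^ n * l₀ ≤ l₀ := mul_le_of_le_one_left hl₀.le (pow_le_one₀ hk.le hk1.le)
  calc w l₀ (T^[n] x) (T^[m] x)
      ≤ ENNReal.ofReal (s / l₀) * w s (T^[n] x) (T^[m] x) :=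
        hw.le_ofReal_div_mul hs (hsl.trans hkn) _ _
    _ ≤ ENNReal.ofReal (k ^ n) * w l x (T x) := by
        gcongr
        · rwa [div_le_iff₀ hl₀]
        · exact hw.sum_Ico_le (fun i => by positivity) hstep hnm

end Contraction

theorem stmt17_general {X : Type*} (w : ℝ → X → X → ℝ≥0∞)
    (h0 : ∀ l : ℝ, 0 < l → ∀ x : X, w l x x = 0)
    (hsym : ∀ l : ℝ, 0 < l → ∀ x y : X, w l x y = w l y x)
    (hconv : ∀ l m : ℝ, 0 < l → 0 < m → ∀ x y z : X,
      w (l + m) x y ≤ ENNReal.ofReal (l / (l + m)) * w l x z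
        + ENNReal.ofReal (m / (l + m)) * w m y z)
    (hstrict : ∀ x y : X, ∀ l : ℝ, 0 < l → w l x y = 0 → x = y)
    (S : Set X)
    (hcomplete : ∀ (xs : ℕ → X), (∀ n, xs n ∈ S) → ∀ l : ℝ, 0 < l →
      Tendsto (fun p : ℕ × ℕ => w l (xs p.1) (xs p.2)) atTop (nhds 0) →
      ∃ x ∈ S, Tendsto (fun n => w l (xs n) x) atTop (nhds 0))
    (T : X → X) (hT : ∀ x ∈ S, T x ∈ S)
    (k l₀ : ℝ) (hk : 0 < k) (hk1 : k < 1) (hl₀ : 0 < l₀)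
    (hcontr : ∀ l : ℝ, 0 < l → l ≤ l₀ → ∀ x ∈ S, ∀ y ∈ S,
      w (k * l) (T x) (T y) ≤ w l x y)
    (hreach : ∀ l : ℝ, 0 < l → ∃ x ∈ S, w l x (T x) < ⊤) :
    ∃ x ∈ S, T x = x := by
  have hw : IsConvexModular w := ⟨h0, hsym, hconv⟩
  obtain ⟨x, hxS, hC⟩ := hreach ((1 - k) * l₀) (mul_pos (sub_pos.2 hk1) hl₀)
  have horbit : ∀ n, T^[n] x ∈ S := fun n => Set.MapsTo.iterate (fun _ => hT _) n hxS
  have hgeom : Tendsto (fun n : ℕ => ENNReal.ofReal (k ^ n) * w ((1 - k) * l₀) x (T x))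
      atTop (nhds 0) := by
    simpa using ENNReal.Tendsto.mul_const (ENNReal.tendsto_ofReal
      (tendsto_pow_atTop_nhds_zero_of_lt_one hk.le hk1)) (Or.inr hC.ne)
  obtain ⟨y, hyS, hy⟩ := hcomplete _ horbit l₀ hl₀ <| hw.tendsto_prod_atTop_zero_of_le hl₀ hgeom
    fun n m => iterate_le_pow_mul_of_modular_contraction hw hT hk hk1 hl₀ hcontr hxS
  have hTy : Tendsto (fun n => w (k * l₀) (T^[n + 1] x) (T y)) atTop (nhds 0) :=
    tendsto_of_tendsto_of_tendsto_of_le_of_le tendsto_const_nhds hy (fun _ => zero_le)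
      fun n => by
        rw [Function.iterate_succ_apply']
        exact hcontr l₀ hl₀ le_rfl _ (horbit n) y hyS
  have hshift := hy.comp (tendsto_add_atTop_nat 1)
  exact ⟨y, hyS, (hstrict y (T y) _ (by positivity)
    (hw.add_eq_zero_of_tendsto hl₀ (mul_pos hk hl₀) hshift hTy)).symm⟩

/-- Fixed point theorem for modular contractions: if `w` is a strict convex modular,
`X_w*` is modular complete, `T` is modular contractive and condition (6.11) holds,
then `T` has a fixed point in `X_w*`. -/
theorem stmt17 {X : Type*} (w : ℝ → X → X → ℝ≥0∞) (x₀ : X)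
    (h0 : ∀ l : ℝ, 0 < l → ∀ x : X, w l x x = 0)
    (hsym : ∀ l : ℝ, 0 < l → ∀ x y : X, w l x y = w l y x)
    (hconv : ∀ l m : ℝ, 0 < l → 0 < m → ∀ x y z : X,
      w (l + m) x y ≤ ENNReal.ofReal (l / (l + m)) * w l x z
        + ENNReal.ofReal (m / (l + m)) * w m y z)
    (hstrict : ∀ x y : X, ∀ l : ℝ, 0 < l → w l x y = 0 → x = y)
    (S : Set X) (hS : S = {x : X | ∃ l : ℝ, 0 < l ∧ w l x x₀ < ⊤})
    (hcomplete : ∀ (xs : ℕ → X), (∀ n, xs n ∈ S) → ∀ l : ℝ, 0 < l →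
      Tendsto (fun p : ℕ × ℕ => w l (xs p.1) (xs p.2)) atTop (nhds 0) →
      ∃ x ∈ S, Tendsto (fun n => w l (xs n) x) atTop (nhds 0))
    (T : X → X) (hT : ∀ x ∈ S, T x ∈ S)
    (k l₀ : ℝ) (hk : 0 < k) (hk1 : k < 1) (hl₀ : 0 < l₀)
    (hcontr : ∀ l : ℝ, 0 < l → l ≤ l₀ → ∀ x ∈ S, ∀ y ∈ S,
      w (k * l) (T x) (T y) ≤ w l x y)
    (hreach : ∀ l : ℝ, 0 < l → ∃ x ∈ S, w l x (T x) < ⊤) :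
    ∃ x ∈ S, T x = x :=
  stmt17_general w h0 hsym hconv hstrict S hcomplete T hT k l₀ hk hk1 hl₀ hcontr hreach
end

section
/- Let w be a strict convex modular on X with X_w* modular complete, assuming w takes only finite values on X_w*. If T:X_w*→X_w* satisfies w_{kλ}(Tx,Ty) ≤ w_λ(x,y) for some 0<k<1, some λ₀>0, all 0<λ≤λ₀, and all x,y∈X_w*, then T has a unique fixed point x*, and for each x̄∈X_w* the iterates Tⁿx̄ converge to x* in the modular sense (∃λ>0 with w_λ(Tⁿx̄,x*)→0). -/
/-!
For a convex modular `w`, the quantity `l * w l x y` satisfies a triangle inequality in which the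
levels add, and it is antitone in the level `l`. With `μ = (1 - k) λ`, the contraction gives
`w (kⁱ μ) (Tⁱ z) (Tⁱ⁺¹ z) ≤ w μ z (T z)`; chaining these steps, whose levels `kⁱ μ` for
`n ≤ i < m` sum to at most `kⁿ λ`, yields `w λ (Tⁿ z) (Tᵐ z) ≤ kⁿ w μ z (T z)`, so orbits are
modular Cauchy at the fixed level `λ`. Completeness gives a limit, the triangle inequality and
strictness make it a fixed point, and contracting towards it shows that every orbit converges to
it, which forces uniqueness.
-/

open ENNReal Filter Finset

theorem tendsto_ofReal_pow_mul_nhds_zero {k : ℝ} (hk1 : k < 1) {C : ℝ≥0∞} (hC : C ≠ ⊤) :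
    Tendsto (fun n : ℕ => ENNReal.ofReal k ^ n * C) atTop (nhds 0) := by
  simpa using ENNReal.Tendsto.mul_const
    (ENNReal.tendsto_pow_atTop_nhds_zero_of_lt_one (ENNReal.ofReal_lt_one.2 hk1)) (Or.inr hC)

theorem tendsto_prod_atTop_of_symm_of_le {f : ℕ → ℕ → ℝ≥0∞} {g : ℕ → ℝ≥0∞}
    (hsymm : ∀ n m, f n m = f m n) (hle : ∀ n m, n ≤ m → f n m ≤ g n)
    (hg : Tendsto g atTop (nhds 0)) :
    Tendsto (fun p : ℕ × ℕ => f p.1 p.2) atTop (nhds 0) := by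
  have hmin : Tendsto (fun p : ℕ × ℕ => min p.1 p.2) atTop atTop := by
    rw [← prod_atTop_atTop_eq]
    exact tendsto_inf_atTop _ tendsto_fst tendsto_snd
  refine tendsto_of_tendsto_of_tendsto_of_le_of_le tendsto_const_nhds (hg.comp hmin)
    (fun _ => zero_le) fun p => ?_
  rcases le_total p.1 p.2 with h | h
  · simpa [min_eq_left h] using hle _ _ h
  · simpa [min_eq_right h, hsymm p.1] using hle _ _ h

section ConvexModular

variable {X : Type*} {w : ℝ → X → X → ℝ≥0∞}

def ModularConvex (w : ℝ → X → X → ℝ≥0∞) : Prop :=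
  ∀ l m : ℝ, 0 < l → 0 < m → ∀ x y z : X,
    w (l + m) x y ≤ ENNReal.ofReal (l / (l + m)) * w l x z + ENNReal.ofReal (m / (l + m)) * w m y z

noncomputable def scaledModular (w : ℝ → X → X → ℝ≥0∞) (l : ℝ) (x y : X) : ℝ≥0∞ :=
  ENNReal.ofReal l * w l x y

theorem scaledModular_add_le
    (hsym : ∀ l : ℝ, 0 < l → ∀ x y : X, w l x y = w l y x)
    (hconv : ModularConvex w)
    {l m : ℝ} (hl : 0 < l) (hm : 0 < m) (x y z : X) :
    scaledModular w (l + m) x y ≤ scaledModular w l x z + scaledModular w m z y := by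
  have hlm : 0 < l + m := hl.trans (lt_add_of_pos_right l hm)
  have hscale : ∀ a : ℝ, 0 ≤ a →
      ENNReal.ofReal (l + m) * ENNReal.ofReal (a / (l + m)) = ENNReal.ofReal a := fun a ha => by
    rw [← ENNReal.ofReal_mul hlm.le, mul_div_cancel₀ a hlm.ne']
  calc scaledModular w (l + m) x y
      ≤ ENNReal.ofReal (l + m) *
          (ENNReal.ofReal (l / (l + m)) * w l x z + ENNReal.ofReal (m / (l + m)) * w m y z) :=
        mul_le_mul_right (hconv l m hl hm x y z) _
    _ = scaledModular w l x z + scaledModular w m z y := by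
        rw [scaledModular, scaledModular, mul_add, ← mul_assoc, ← mul_assoc, hscale l hl.le,
          hscale m hm.le, hsym m hm y z]

theorem scaledModular_anti
    (h0 : ∀ l : ℝ, 0 < l → ∀ x : X, w l x x = 0)
    (hconv : ModularConvex w)
    {μ l : ℝ} (hμ : 0 < μ) (hμl : μ ≤ l) (x y : X) :
    scaledModular w l x y ≤ scaledModular w μ x y := by
  rcases hμl.eq_or_lt with rfl | hlt
  · exact le_rfl
  have hconv' := hconv μ (l - μ) hμ (sub_pos.2 hlt) x y y
  rw [add_sub_cancel, h0 _ (sub_pos.2 hlt), mul_zero, add_zero] at hconv'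
  calc scaledModular w l x y
      ≤ ENNReal.ofReal l * (ENNReal.ofReal (μ / l) * w μ x y) := mul_le_mul_right hconv' _
    _ = scaledModular w μ x y := by
        rw [scaledModular, ← mul_assoc, ← ENNReal.ofReal_mul (hμ.le.trans hμl),
          mul_div_cancel₀ μ (hμ.trans hlt).ne']

theorem scaledModular_sum_le
    (hsym : ∀ l : ℝ, 0 < l → ∀ x y : X, w l x y = w l y x)
    (hconv : ModularConvex w)
    (x : ℕ → X) {l : ℕ → ℝ} (hl : ∀ i, 0 < l i) {n m : ℕ} (hnm : n < m) :
    scaledModular w (∑ i ∈ Ico n m, l i) (x n) (x m)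
      ≤ ∑ i ∈ Ico n m, scaledModular w (l i) (x i) (x (i + 1)) := by
  induction m, hnm using Nat.le_induction with
  | base => simp
  | succ m hnm ih =>
    rw [sum_Ico_succ_top (Nat.le_of_succ_le hnm), sum_Ico_succ_top (Nat.le_of_succ_le hnm)]
    have hsum : 0 < ∑ i ∈ Ico n m, l i := sum_pos (fun i _ => hl i) (nonempty_Ico.2 hnm)
    exact (scaledModular_add_le hsym hconv hsum (hl m) _ _ (x m)).trans (add_le_add ih le_rfl)

end ConvexModular

section ModularContraction

variable {X : Type*} {w : ℝ → X → X → ℝ≥0∞} {S : Set X} {T : X → X} {k l₀ : ℝ}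

def ModularContractionOn (w : ℝ → X → X → ℝ≥0∞) (S : Set X) (T : X → X) (k l₀ : ℝ) : Prop :=
  ∀ l : ℝ, 0 < l → l ≤ l₀ → ∀ x ∈ S, ∀ y ∈ S, w (k * l) (T x) (T y) ≤ w l x y

theorem ModularContractionOn.iterate_le (hcontr : ModularContractionOn w S T k l₀)
    (hT : Set.MapsTo T S S) (hk : 0 < k) (hk1 : k ≤ 1) {l : ℝ} (hl : 0 < l) (hll₀ : l ≤ l₀)
    {x y : X} (hx : x ∈ S) (hy : y ∈ S) (n : ℕ) :
    w (k ^ n * l) (T^[n] x) (T^[n] y) ≤ w l x y := by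
  induction n with
  | zero => simp
  | succ n ih =>
    have hkn : k ^ n * l ≤ l₀ := (mul_le_of_le_one_left hl.le (pow_le_one₀ hk.le hk1)).trans hll₀
    rw [Function.iterate_succ_apply', Function.iterate_succ_apply', pow_succ', mul_assoc]
    exact (hcontr _ (by positivity) hkn _ (hT.iterate n hx) _ (hT.iterate n hy)).trans ih

theorem ModularContractionOn.iterate_le_pow_mul (hcontr : ModularContractionOn w S T k l₀)
    (h0 : ∀ l : ℝ, 0 < l → ∀ x : X, w l x x = 0) (hconv : ModularConvex w)
    (hT : Set.MapsTo T S S) (hk : 0 < k) (hk1 : k ≤ 1) {l : ℝ} (hl : 0 < l) (hll₀ : l ≤ l₀)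
    {x y : X} (hx : x ∈ S) (hy : y ∈ S) (n : ℕ) :
    w l (T^[n] x) (T^[n] y) ≤ ENNReal.ofReal k ^ n * w l x y := by
  refine (ENNReal.mul_le_mul_iff_right (ENNReal.ofReal_pos.2 hl).ne' ENNReal.ofReal_ne_top).1 ?_
  calc scaledModular w l (T^[n] x) (T^[n] y)
      ≤ scaledModular w (k ^ n * l) (T^[n] x) (T^[n] y) :=
        scaledModular_anti h0 hconv (by positivity)
          (mul_le_of_le_one_left hl.le (pow_le_one₀ hk.le hk1)) _ _
    _ ≤ ENNReal.ofReal (k ^ n * l) * w l x y :=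
        mul_le_mul_right (hcontr.iterate_le hT hk hk1 hl hll₀ hx hy n) _
    _ = ENNReal.ofReal l * (ENNReal.ofReal k ^ n * w l x y) := by
        rw [ENNReal.ofReal_mul (by positivity), ENNReal.ofReal_pow hk.le]
        ring

theorem ModularContractionOn.orbit_le_pow_mul (hcontr : ModularContractionOn w S T k l₀)
    (h0 : ∀ l : ℝ, 0 < l → ∀ x : X, w l x x = 0)
    (hsym : ∀ l : ℝ, 0 < l → ∀ x y : X, w l x y = w l y x) (hconv : ModularConvex w)
    (hT : Set.MapsTo T S S) (hk : 0 < k) (hk1 : k < 1) {l : ℝ} (hl : 0 < l)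
    (hll₀ : (1 - k) * l ≤ l₀) {z : X} (hz : z ∈ S) {n m : ℕ} (hnm : n ≤ m) :
    w l (T^[n] z) (T^[m] z) ≤ ENNReal.ofReal k ^ n * w ((1 - k) * l) z (T z) := by
  rcases hnm.eq_or_lt with rfl | hlt
  · simp [h0 l hl]
  have hstep : 0 < (1 - k) * l := mul_pos (sub_pos.2 hk1) hl
  set a : ℕ → ℝ := fun i => k ^ i * ((1 - k) * l) with ha
  have ha_pos : ∀ i, 0 < a i := fun i => by positivity
  have hsum : ∑ i ∈ Ico n m, a i ≤ k ^ n * l :=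
    calc ∑ i ∈ Ico n m, a i ≤ k ^ n / (1 - k) * ((1 - k) * l) := by
          rw [ha, ← sum_mul]
          exact mul_le_mul_of_nonneg_right (geom_sum_Ico_le_of_lt_one hk.le hk1) hstep.le
      _ = k ^ n * l := by field_simp [(sub_pos.2 hk1).ne']
  refine (ENNReal.mul_le_mul_iff_right (ENNReal.ofReal_pos.2 hl).ne' ENNReal.ofReal_ne_top).1 ?_
  calc scaledModular w l (T^[n] z) (T^[m] z)
      ≤ scaledModular w (∑ i ∈ Ico n m, a i) (T^[n] z) (T^[m] z) :=
        scaledModular_anti h0 hconv (sum_pos (fun i _ => ha_pos i) (nonempty_Ico.2 hlt))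
          (hsum.trans (mul_le_of_le_one_left hl.le (pow_le_one₀ hk.le hk1.le))) _ _
    _ ≤ ∑ i ∈ Ico n m, scaledModular w (a i) (T^[i] z) (T^[i + 1] z) :=
        scaledModular_sum_le hsym hconv (fun i => T^[i] z) ha_pos hlt
    _ ≤ ∑ i ∈ Ico n m, ENNReal.ofReal (a i) * w ((1 - k) * l) z (T z) := by
        refine sum_le_sum fun i _ => mul_le_mul_right ?_ _
        rw [Function.iterate_succ_apply]
        exact hcontr.iterate_le hT hk hk1.le hstep hll₀ hz (hT hz) i
    _ = ENNReal.ofReal (∑ i ∈ Ico n m, a i) * w ((1 - k) * l) z (T z) := by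
        rw [← sum_mul, ENNReal.ofReal_sum_of_nonneg fun i _ => (ha_pos i).le]
    _ ≤ ENNReal.ofReal (k ^ n * l) * w ((1 - k) * l) z (T z) := by gcongr
    _ = ENNReal.ofReal l * (ENNReal.ofReal k ^ n * w ((1 - k) * l) z (T z)) := by
        rw [ENNReal.ofReal_mul (by positivity), ENNReal.ofReal_pow hk.le]
        ring

theorem ModularContractionOn.isFixedPt_of_tendsto (hcontr : ModularContractionOn w S T k l₀)
    (hsym : ∀ l : ℝ, 0 < l → ∀ x y : X, w l x y = w l y x) (hconv : ModularConvex w)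
    (hstrict : ∀ x y : X, ∀ l : ℝ, 0 < l → w l x y = 0 → x = y)
    (hT : Set.MapsTo T S S) (hk : 0 < k) {l : ℝ} (hl : 0 < l) (hll₀ : l ≤ l₀)
    {x p : X} (hx : x ∈ S) (hp : p ∈ S)
    (hlim : Tendsto (fun n => w l (T^[n] x) p) atTop (nhds 0)) :
    Function.IsFixedPt T p := by
  have hlim_succ : Tendsto (fun n => w (k * l) (T p) (T^[n + 1] x)) atTop (nhds 0) := by
    refine tendsto_of_tendsto_of_tendsto_of_le_of_le tendsto_const_nhds hlim
      (fun _ => zero_le) fun n => ?_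
    rw [hsym _ (by positivity), Function.iterate_succ_apply']
    exact hcontr l hl hll₀ _ (hT.iterate n hx) _ hp
  have hbound : ∀ n, scaledModular w (k * l + l) (T p) p
      ≤ scaledModular w (k * l) (T p) (T^[n + 1] x) + scaledModular w l (T^[n + 1] x) p :=
    fun n => scaledModular_add_le hsym hconv (by positivity) hl _ _ _
  have hbound_lim : Tendsto (fun n => scaledModular w (k * l) (T p) (T^[n + 1] x)
      + scaledModular w l (T^[n + 1] x) p) atTop (nhds 0) := by
    simpa [scaledModular] using
      (ENNReal.Tendsto.const_mul hlim_succ (Or.inr ENNReal.ofReal_ne_top)).add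
        (ENNReal.Tendsto.const_mul (hlim.comp (tendsto_add_atTop_nat 1))
          (Or.inr ENNReal.ofReal_ne_top))
  have hzero : scaledModular w (k * l + l) (T p) p = 0 :=
    le_antisymm (ge_of_tendsto' hbound_lim hbound) zero_le
  have hkl : 0 < k * l + l := by positivity
  rw [scaledModular, mul_eq_zero, ENNReal.ofReal_eq_zero] at hzero
  exact hstrict _ _ _ hkl (hzero.resolve_left hkl.not_ge)

theorem ModularContractionOn.tendsto_of_isFixedPt (hcontr : ModularContractionOn w S T k l₀)
    (h0 : ∀ l : ℝ, 0 < l → ∀ x : X, w l x x = 0) (hconv : ModularConvex w)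
    (hT : Set.MapsTo T S S) (hk : 0 < k) (hk1 : k < 1) {l : ℝ} (hl : 0 < l) (hll₀ : l ≤ l₀)
    {p z : X} (hp : p ∈ S) (hTp : Function.IsFixedPt T p) (hz : z ∈ S) (hfin : w l z p ≠ ⊤) :
    Tendsto (fun n => w l (T^[n] z) p) atTop (nhds 0) := by
  refine tendsto_of_tendsto_of_tendsto_of_le_of_le tendsto_const_nhds
    (tendsto_ofReal_pow_mul_nhds_zero hk1 hfin) (fun _ => zero_le) fun n => ?_
  simpa [Function.iterate_fixed hTp] using
    hcontr.iterate_le_pow_mul h0 hconv hT hk hk1.le hl hll₀ hz hp n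

end ModularContraction

/-- Fixed point theorem, finite-valued case: the fixed point is unique and all
sequences of iterates converge to it in the modular sense. -/
theorem stmt18 {X : Type*} (w : ℝ → X → X → ℝ≥0∞) (x₀ : X)
    (h0 : ∀ l : ℝ, 0 < l → ∀ x : X, w l x x = 0)
    (hsym : ∀ l : ℝ, 0 < l → ∀ x y : X, w l x y = w l y x)
    (hconv : ∀ l m : ℝ, 0 < l → 0 < m → ∀ x y z : X,
      w (l + m) x y ≤ ENNReal.ofReal (l / (l + m)) * w l x z
        + ENNReal.ofReal (m / (l + m)) * w m y z)
    (hstrict : ∀ x y : X, ∀ l : ℝ, 0 < l → w l x y = 0 → x = y)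
    (S : Set X) (hS : S = {x : X | ∃ l : ℝ, 0 < l ∧ w l x x₀ < ⊤})
    (hcomplete : ∀ (xs : ℕ → X), (∀ n, xs n ∈ S) → ∀ l : ℝ, 0 < l →
      Tendsto (fun p : ℕ × ℕ => w l (xs p.1) (xs p.2)) atTop (nhds 0) →
      ∃ x ∈ S, Tendsto (fun n => w l (xs n) x) atTop (nhds 0))
    (hfin : ∀ l : ℝ, 0 < l → ∀ x ∈ S, ∀ y ∈ S, w l x y < ⊤)
    (T : X → X) (hT : ∀ x ∈ S, T x ∈ S)
    (k l₀ : ℝ) (hk : 0 < k) (hk1 : k < 1) (hl₀ : 0 < l₀)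
    (hcontr : ∀ l : ℝ, 0 < l → l ≤ l₀ → ∀ x ∈ S, ∀ y ∈ S,
      w (k * l) (T x) (T y) ≤ w l x y) :
    ∃ x ∈ S, T x = x ∧ (∀ y ∈ S, T y = y → y = x) ∧
      ∀ z ∈ S, ∃ l : ℝ, 0 < l ∧
        Tendsto (fun n => w l (T^[n] z) x) atTop (nhds 0) := by
  have hcontr : ModularContractionOn w S T k l₀ := hcontr
  have hT : Set.MapsTo T S S := hT
  have hx₀ : x₀ ∈ S := by
    rw [hS]
    exact ⟨1, one_pos, by simp [h0 1 one_pos x₀]⟩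
  have hstep : 0 < (1 - k) * l₀ := mul_pos (sub_pos.2 hk1) hl₀
  have hcauchy : Tendsto (fun p : ℕ × ℕ => w l₀ (T^[p.1] x₀) (T^[p.2] x₀)) atTop (nhds 0) :=
    tendsto_prod_atTop_of_symm_of_le (f := fun n m => w l₀ (T^[n] x₀) (T^[m] x₀))
      (fun n m => hsym l₀ hl₀ _ _)
      (fun n m hnm => hcontr.orbit_le_pow_mul h0 hsym hconv hT hk hk1 hl₀
        (mul_le_of_le_one_left hl₀.le (sub_le_self 1 hk.le)) hx₀ hnm)
      (tendsto_ofReal_pow_mul_nhds_zero hk1 (hfin _ hstep _ hx₀ _ (hT hx₀)).ne)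
  obtain ⟨p, hp, hlim⟩ := hcomplete _ (fun n => hT.iterate n hx₀) l₀ hl₀ hcauchy
  have hTp : T p = p := hcontr.isFixedPt_of_tendsto hsym hconv hstrict hT hk hl₀ le_rfl hx₀ hp hlim
  have horbit : ∀ z ∈ S, Tendsto (fun n => w l₀ (T^[n] z) p) atTop (nhds 0) := fun z hz =>
    hcontr.tendsto_of_isFixedPt h0 hconv hT hk hk1 hl₀ le_rfl hp hTp hz (hfin _ hl₀ _ hz _ hp).ne
  refine ⟨p, hp, hTp, fun y hy hTy => ?_, fun z hz => ⟨l₀, hl₀, horbit z hz⟩⟩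
  have hy_lim := horbit y hy
  simp only [Function.iterate_fixed hTy] at hy_lim
  exact hstrict y p l₀ hl₀ (tendsto_nhds_unique tendsto_const_nhds hy_lim)
end

section
/- Let w be a strict modular on X (not necessarily convex) with X_w* modular complete, and T:X_w*→X_w* strongly modular contractive: there exist 0<k<1 and λ₀>0 with w_{kλ}(Tx,Ty) ≤ k·w_λ(x,y) for all 0<λ≤λ₀ and x,y∈X_w*. Assume for each λ>0 there exists x∈X_w* with w_λ(x,Tx)<∞. Then T has a fixed point in X_w*. -/
open ENNReal Filter

/-!
Iterate `T` from a point `x` with `w_{(1-k)λ₀}(x, Tx) < ∞`. Contractivity gives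
`w_{kⁿ(1-k)λ₀}(Tⁿx, Tⁿ⁺¹x) ≤ kⁿ w_{(1-k)λ₀}(x, Tx)`, and the triangle inequality along the orbit,
with parameters `kⁱ(1-k)λ₀` whose total stays below `λ₀`, bounds `w_{λ₀}(Tⁿx, Tᵐx)` by a geometric
tail. So the orbit is modular Cauchy at `λ₀` and converges to some `y`; then
`w_{2λ₀}(Ty, y) ≤ k w_{λ₀}(Tⁿx, y) + w_{λ₀}(Tⁿ⁺¹x, y) → 0`, and strictness gives `Ty = y`.
-/

structure IsMetricModular {X : Type*} (w : ℝ → X → X → ℝ≥0∞) : Prop where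
  self_eq_zero : ∀ l : ℝ, 0 < l → ∀ x : X, w l x x = 0
  symm : ∀ l : ℝ, 0 < l → ∀ x y : X, w l x y = w l y x
  triangle : ∀ l m : ℝ, 0 < l → 0 < m → ∀ x y z : X, w (l + m) x y ≤ w l x z + w m z y

def IsStrongModularContraction {X : Type*} (w : ℝ → X → X → ℝ≥0∞) (S : Set X) (T : X → X)
    (k l₀ : ℝ) : Prop :=
  ∀ l : ℝ, 0 < l → l ≤ l₀ → ∀ x ∈ S, ∀ y ∈ S, w (k * l) (T x) (T y) ≤ ENNReal.ofReal k * w l x y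

theorem Real.sum_Ico_geometric_mul_le {k : ℝ} (hk : 0 ≤ k) (hk1 : k < 1) {c : ℝ} (hc : 0 ≤ c)
    (n m : ℕ) : ∑ i ∈ Finset.Ico n m, k ^ i * ((1 - k) * c) ≤ c := by
  have hsum : ∑ i ∈ Finset.Ico n m, k ^ i ≤ (1 - k)⁻¹ := by
    rw [← tsum_geometric_of_lt_one hk hk1]
    exact (summable_geometric_of_lt_one hk hk1).sum_le_tsum _ fun i _ => pow_nonneg hk i
  calc ∑ i ∈ Finset.Ico n m, k ^ i * ((1 - k) * c)
      = (∑ i ∈ Finset.Ico n m, k ^ i) * ((1 - k) * c) := (Finset.sum_mul ..).symm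
    _ ≤ (1 - k)⁻¹ * ((1 - k) * c) := by gcongr
    _ = c := by field_simp [(sub_pos.2 hk1).ne']

theorem ENNReal.sum_Ico_geometric_mul_le (r C : ℝ≥0∞) (n m : ℕ) :
    ∑ i ∈ Finset.Ico n m, r ^ i * C ≤ r ^ n * ((1 - r)⁻¹ * C) := by
  rw [Finset.sum_Ico_eq_sum_range, ← tsum_geometric]
  calc ∑ i ∈ Finset.range (m - n), r ^ (n + i) * C
      = r ^ n * ((∑ i ∈ Finset.range (m - n), r ^ i) * C) := by
        simp only [pow_add, Finset.sum_mul, Finset.mul_sum, mul_assoc]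
    _ ≤ r ^ n * ((∑' i, r ^ i) * C) := by gcongr; exact ENNReal.sum_le_tsum _

namespace IsMetricModular

variable {X : Type*} {w : ℝ → X → X → ℝ≥0∞}

theorem le_of_param_le (hw : IsMetricModular w) {l m : ℝ} (hl : 0 < l) (hlm : l ≤ m) (x y : X) :
    w m x y ≤ w l x y := by
  rcases hlm.eq_or_lt with rfl | hlt
  · exact le_rfl
  · have hpos : 0 < m - l := sub_pos.2 hlt
    calc w m x y = w (l + (m - l)) x y := by rw [add_sub_cancel]
      _ ≤ w l x y + w (m - l) y y := hw.triangle _ _ hl hpos _ _ _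
      _ = w l x y := by rw [hw.self_eq_zero _ hpos, add_zero]

theorem le_sum_Ico (hw : IsMetricModular w) (xs : ℕ → X) {a : ℕ → ℝ} (ha : ∀ i, 0 < a i)
    {n m : ℕ} (hnm : n < m) :
    w (∑ i ∈ Finset.Ico n m, a i) (xs n) (xs m) ≤
      ∑ i ∈ Finset.Ico n m, w (a i) (xs i) (xs (i + 1)) := by
  induction m, hnm using Nat.le_induction with
  | base => simp
  | succ m hm ih =>
    have hpos : 0 < ∑ i ∈ Finset.Ico n m, a i :=
      Finset.sum_pos (fun i _ => ha i) (Finset.nonempty_Ico.2 hm)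
    rw [Finset.sum_Ico_succ_top (Nat.le_of_succ_le hm), Finset.sum_Ico_succ_top (Nat.le_of_succ_le hm)]
    calc _ ≤ _ := hw.triangle _ _ hpos (ha m) _ _ _
      _ ≤ _ := by gcongr

end IsMetricModular
namespace IsStrongModularContraction

variable {X : Type*} {w : ℝ → X → X → ℝ≥0∞} {S : Set X} {T : X → X} {k l₀ : ℝ}

theorem iterate_le (hc : IsStrongModularContraction w S T k l₀) (hT : Set.MapsTo T S S)
    (hk : 0 < k) (hk1 : k ≤ 1) {l : ℝ} (hl : 0 < l) (hll₀ : l ≤ l₀) {x : X} (hx : x ∈ S)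
    (n : ℕ) : w (k ^ n * l) (T^[n] x) (T^[n + 1] x) ≤ ENNReal.ofReal k ^ n * w l x (T x) := by
  induction n with
  | zero => simp
  | succ n ih =>
    have hpos : 0 < k ^ n * l := by positivity
    have hle : k ^ n * l ≤ l₀ := (mul_le_of_le_one_left hl.le (pow_le_one₀ hk.le hk1)).trans hll₀
    calc w (k ^ (n + 1) * l) (T^[n + 1] x) (T^[n + 1 + 1] x)
        = w (k * (k ^ n * l)) (T (T^[n] x)) (T (T^[n + 1] x)) := by
          rw [pow_succ', mul_assoc, Function.iterate_succ_apply' T (n + 1),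
            Function.iterate_succ_apply' T n]
      _ ≤ ENNReal.ofReal k * w (k ^ n * l) (T^[n] x) (T^[n + 1] x) :=
          hc _ hpos hle _ (hT.iterate n hx) _ (hT.iterate (n + 1) hx)
      _ ≤ ENNReal.ofReal k * (ENNReal.ofReal k ^ n * w l x (T x)) := by gcongr
      _ = ENNReal.ofReal k ^ (n + 1) * w l x (T x) := by rw [pow_succ', mul_assoc]

theorem iterate_le_geometric_tail (hc : IsStrongModularContraction w S T k l₀)
    (hw : IsMetricModular w) (hT : Set.MapsTo T S S) (hk : 0 < k) (hk1 : k < 1) (hl₀ : 0 < l₀)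
    {x : X} (hx : x ∈ S) {n m : ℕ} (hnm : n < m) :
    w l₀ (T^[n] x) (T^[m] x) ≤
      ENNReal.ofReal k ^ n * ((1 - ENNReal.ofReal k)⁻¹ * w ((1 - k) * l₀) x (T x)) := by
  set l₁ := (1 - k) * l₀
  have hl₁ : 0 < l₁ := mul_pos (sub_pos.2 hk1) hl₀
  have hl₁le : l₁ ≤ l₀ := mul_le_of_le_one_left hl₀.le (by linarith)
  calc w l₀ (T^[n] x) (T^[m] x)
      ≤ w (∑ i ∈ Finset.Ico n m, k ^ i * l₁) (T^[n] x) (T^[m] x) :=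
        hw.le_of_param_le (Finset.sum_pos (fun i _ => by positivity) (Finset.nonempty_Ico.2 hnm))
          (Real.sum_Ico_geometric_mul_le hk.le hk1 hl₀.le n m) _ _
    _ ≤ ∑ i ∈ Finset.Ico n m, w (k ^ i * l₁) (T^[i] x) (T^[i + 1] x) :=
        hw.le_sum_Ico (fun i => T^[i] x) (fun i => by positivity) hnm
    _ ≤ ∑ i ∈ Finset.Ico n m, ENNReal.ofReal k ^ i * w l₁ x (T x) :=
        Finset.sum_le_sum fun i _ => hc.iterate_le hT hk hk1.le hl₁ hl₁le hx i
    _ ≤ _ := ENNReal.sum_Ico_geometric_mul_le _ _ n m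

theorem tendsto_iterate_cauchy (hc : IsStrongModularContraction w S T k l₀)
    (hw : IsMetricModular w) (hT : Set.MapsTo T S S) (hk : 0 < k) (hk1 : k < 1) (hl₀ : 0 < l₀)
    {x : X} (hx : x ∈ S) (hfin : w ((1 - k) * l₀) x (T x) ≠ ⊤) :
    Tendsto (fun p : ℕ × ℕ => w l₀ (T^[p.1] x) (T^[p.2] x)) atTop (nhds 0) := by
  set r := ENNReal.ofReal k
  set D := (1 - r)⁻¹ * w ((1 - k) * l₀) x (T x)
  have hr : r < 1 := ENNReal.ofReal_lt_one.2 hk1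
  have hD : D ≠ ⊤ := ENNReal.mul_ne_top (ENNReal.inv_ne_top.2 (tsub_pos_of_lt hr).ne') hfin
  have hbound : ∀ p : ℕ × ℕ, w l₀ (T^[p.1] x) (T^[p.2] x) ≤ r ^ min p.1 p.2 * D := by
    rintro ⟨n, m⟩
    rcases lt_trichotomy n m with h | rfl | h
    · rw [min_eq_left h.le]
      exact hc.iterate_le_geometric_tail hw hT hk hk1 hl₀ hx h
    · simp [hw.self_eq_zero _ hl₀]
    · rw [hw.symm _ hl₀, min_eq_right h.le]
      exact hc.iterate_le_geometric_tail hw hT hk hk1 hl₀ hx h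
  have hmin : Tendsto (fun p : ℕ × ℕ => min p.1 p.2) atTop atTop :=
    tendsto_atTop_atTop.2 fun b => ⟨(b, b), fun p hp => le_min hp.1 hp.2⟩
  have hlim : Tendsto (fun p : ℕ × ℕ => r ^ min p.1 p.2 * D) atTop (nhds 0) := by
    simpa using ENNReal.Tendsto.mul_const
      ((ENNReal.tendsto_pow_atTop_nhds_zero_of_lt_one hr).comp hmin) (Or.inr hD)
  exact tendsto_of_tendsto_of_tendsto_of_le_of_le tendsto_const_nhds hlim (fun _ => zero_le)
    hbound

theorem eq_of_tendsto_iterate (hc : IsStrongModularContraction w S T k l₀)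
    (hw : IsMetricModular w) (hstrict : ∀ x y : X, ∀ l : ℝ, 0 < l → w l x y = 0 → x = y)
    (hT : Set.MapsTo T S S) (hk : 0 < k) (hk1 : k ≤ 1) (hl₀ : 0 < l₀) {x y : X} (hx : x ∈ S)
    (hy : y ∈ S) (hlim : Tendsto (fun n => w l₀ (T^[n] x) y) atTop (nhds 0)) : T y = y := by
  set r := ENNReal.ofReal k
  have hstep : ∀ n : ℕ,
      w (l₀ + l₀) (T y) y ≤ r * w l₀ (T^[n] x) y + w l₀ (T^[n + 1] x) y := by
    intro n
    have hfirst : w l₀ (T y) (T^[n + 1] x) ≤ r * w l₀ (T^[n] x) y := by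
      rw [Function.iterate_succ_apply', hw.symm _ hl₀ (T^[n] x)]
      calc w l₀ (T y) (T (T^[n] x)) ≤ w (k * l₀) (T y) (T (T^[n] x)) :=
            hw.le_of_param_le (by positivity) (mul_le_of_le_one_left hl₀.le hk1) _ _
        _ ≤ r * w l₀ y (T^[n] x) := hc _ hl₀ le_rfl _ hy _ (hT.iterate n hx)
    calc w (l₀ + l₀) (T y) y ≤ w l₀ (T y) (T^[n + 1] x) + w l₀ (T^[n + 1] x) y :=
          hw.triangle _ _ hl₀ hl₀ _ _ _
      _ ≤ r * w l₀ (T^[n] x) y + w l₀ (T^[n + 1] x) y := by gcongr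
  have hbound :
      Tendsto (fun n => r * w l₀ (T^[n] x) y + w l₀ (T^[n + 1] x) y) atTop (nhds 0) := by
    simpa using (ENNReal.Tendsto.const_mul hlim (Or.inr ENNReal.ofReal_ne_top)).add
      (hlim.comp (tendsto_add_atTop_nat 1))
  exact hstrict _ _ _ (by positivity) (le_antisymm (ge_of_tendsto' hbound hstep) zero_le)

end IsStrongModularContraction

theorem stmt19_general {X : Type*} (w : ℝ → X → X → ℝ≥0∞)
    (h0 : ∀ l : ℝ, 0 < l → ∀ x : X, w l x x = 0)
    (hsym : ∀ l : ℝ, 0 < l → ∀ x y : X, w l x y = w l y x)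
    (htri : ∀ l m : ℝ, 0 < l → 0 < m → ∀ x y z : X,
      w (l + m) x y ≤ w l x z + w m z y)
    (hstrict : ∀ x y : X, ∀ l : ℝ, 0 < l → w l x y = 0 → x = y)
    (S : Set X)
    (hcomplete : ∀ (xs : ℕ → X), (∀ n, xs n ∈ S) → ∀ l : ℝ, 0 < l →
      Tendsto (fun p : ℕ × ℕ => w l (xs p.1) (xs p.2)) atTop (nhds 0) →
      ∃ x ∈ S, Tendsto (fun n => w l (xs n) x) atTop (nhds 0))
    (T : X → X) (hT : ∀ x ∈ S, T x ∈ S)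
    (k l₀ : ℝ) (hk : 0 < k) (hk1 : k < 1) (hl₀ : 0 < l₀)
    (hcontr : ∀ l : ℝ, 0 < l → l ≤ l₀ → ∀ x ∈ S, ∀ y ∈ S,
      w (k * l) (T x) (T y) ≤ ENNReal.ofReal k * w l x y)
    (hreach : ∀ l : ℝ, 0 < l → ∃ x ∈ S, w l x (T x) < ⊤) :
    ∃ x ∈ S, T x = x := by
  have hw : IsMetricModular w := ⟨h0, hsym, htri⟩
  have hc : IsStrongModularContraction w S T k l₀ := hcontr
  obtain ⟨x, hxS, hx⟩ := hreach ((1 - k) * l₀) (mul_pos (sub_pos.2 hk1) hl₀)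
  obtain ⟨y, hyS, hy⟩ := hcomplete (fun n => T^[n] x) (fun n => Set.MapsTo.iterate hT n hxS) l₀
    hl₀ (hc.tendsto_iterate_cauchy hw hT hk hk1 hl₀ hxS hx.ne)
  exact ⟨y, hyS, hc.eq_of_tendsto_iterate hw hstrict hT hk hk1.le hl₀ hxS hyS hy⟩

/-- Fixed point theorem for strong modular contractions of a strict (not
necessarily convex) modular. -/
theorem stmt19 {X : Type*} (w : ℝ → X → X → ℝ≥0∞) (x₀ : X)
    (h0 : ∀ l : ℝ, 0 < l → ∀ x : X, w l x x = 0)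
    (hsym : ∀ l : ℝ, 0 < l → ∀ x y : X, w l x y = w l y x)
    (htri : ∀ l m : ℝ, 0 < l → 0 < m → ∀ x y z : X,
      w (l + m) x y ≤ w l x z + w m z y)
    (hstrict : ∀ x y : X, ∀ l : ℝ, 0 < l → w l x y = 0 → x = y)
    (S : Set X) (hS : S = {x : X | ∃ l : ℝ, 0 < l ∧ w l x x₀ < ⊤})
    (hcomplete : ∀ (xs : ℕ → X), (∀ n, xs n ∈ S) → ∀ l : ℝ, 0 < l →
      Tendsto (fun p : ℕ × ℕ => w l (xs p.1) (xs p.2)) atTop (nhds 0) →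
      ∃ x ∈ S, Tendsto (fun n => w l (xs n) x) atTop (nhds 0))
    (T : X → X) (hT : ∀ x ∈ S, T x ∈ S)
    (k l₀ : ℝ) (hk : 0 < k) (hk1 : k < 1) (hl₀ : 0 < l₀)
    (hcontr : ∀ l : ℝ, 0 < l → l ≤ l₀ → ∀ x ∈ S, ∀ y ∈ S,
      w (k * l) (T x) (T y) ≤ ENNReal.ofReal k * w l x y)
    (hreach : ∀ l : ℝ, 0 < l → ∃ x ∈ S, w l x (T x) < ⊤) :
    ∃ x ∈ S, T x = x :=
  stmt19_general w h0 hsym htri hstrict S hcomplete T hT k l₀ hk hk1 hl₀ hcontr hreach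
end
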